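/- arXiv:0902.0204 — 5 statements merged into one kernel-verified Lean document; each statement's English description precedes it below -/
import Mathlib

section
/- There exists a constant C > 0 depending only on d such that for every probability measure ℙ as in the setting, every f ∈ L²(ℙ) with f ≠ 0 and every t ≥ 1: 𝔼[(f°_t)²] ≤ C · (∫₁ᵗ 𝒩′(f°_s)^{−2/d} ds)^{−d/2}, where 𝒩′(g) := max(𝒩(g), 𝔼[f²]) (the second argument being the squared L² norm of the initial function f). -/
open MeasureTheory ENNReal
open scoped ENNReal NNReal BigOperators

namespace RWRC

/-- sites of `ℤ^d` -/
abbrev V (d : ℕ) := Fin d → ℤ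

/-- an (unoriented) nearest-neighbour edge of `ℤ^d`, encoded as `(x, i) = {x, x + eᵢ}` -/
abbrev Edge (d : ℕ) := (Fin d → ℤ) × Fin d

/-- an environment: a conductance attached to every edge -/
abbrev Env (d : ℕ) := Edge d → ℝ

/-- translation of the environment by `x` : `(θ_x ω)_{y,z} = ω_{x+y,x+z}` -/
def theta {d : ℕ} (x : V d) (ω : Env d) : Env d := fun e => ω (x + e.1, e.2)

/-- the unit vector `±eᵢ` encoded by `p = (i, sign)` -/
def dir {d : ℕ} (p : Fin d × Bool) : V d :=
  if p.2 then Pi.single p.1 1 else -Pi.single p.1 1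

/-- the edge `{0, dir p}` -/
def edgeOf {d : ℕ} (p : Fin d × Bool) : Edge d :=
  (if p.2 then (0 : V d) else -Pi.single p.1 1, p.1)

/-- the box `B_n = {-n, …, n}^d` -/
noncomputable def box (d n : ℕ) : Finset (V d) := Fintype.piFinset fun _ => Finset.Icc (-(n : ℤ)) n

/-- `S_n(f)(ω) = ∑_{x ∈ B_n} f(θ_x ω)` -/
noncomputable def Sfun (d n : ℕ) (f : Env d → ℝ) (ω : Env d) : ℝ :=
  ∑ x ∈ box d n, f (theta x ω)

/-- Dirichlet form `ℰ(f,f) = (1/2) ∑_{|z|=1} 𝔼[ω_{0,z} (f(θ_z ω) - f(ω))²]` of the random walk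
among random conductances -/
noncomputable def dirichlet {d : ℕ} (P : Measure (Env d)) (f : Env d → ℝ) : ℝ :=
  (1 / 2) * ∑ p : Fin d × Bool,
    ∫ ω, ω (edgeOf p) * (f (theta (dir p) ω) - f ω) ^ 2 ∂P

/-- Dirichlet form `ℰ°(f,f) = (1/2) ∑_{|z|=1} 𝔼[(f(θ_z ω) - f(ω))²]` of the simple random walk -/
noncomputable def dirichlet0 {d : ℕ} (P : Measure (Env d)) (f : Env d → ℝ) : ℝ :=
  (1 / 2) * ∑ p : Fin d × Bool,
    ∫ ω, (f (theta (dir p) ω) - f ω) ^ 2 ∂P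

/-- `𝒩(g) = sup_n 𝔼[S_n(g)²]/|B_n|`, with values in `[0,∞]` -/
noncomputable def calN {d : ℕ} (P : Measure (Env d)) (g : Env d → ℝ) : ℝ≥0∞ :=
  ⨆ n : ℕ, (∫⁻ ω, ENNReal.ofReal (Sfun d n g ω ^ 2) ∂P) / ((box d n).card : ℝ≥0∞)

/-!
Nash's argument, run for the simple random walk. Along `u s = exp (s L°) f` one has
`d/ds ‖u s‖² = -E(u s)`, where `E g = ∑_{|z|=1} ‖g ∘ θ_z - g‖²`. Comparing `g` with its average
over the box `B_n`, the average is controlled by `𝒩(g)` and, by translation invariance, the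
deviation by `d n √E(g)`; optimising in `n` gives the Nash inequality
`‖g‖^{2 + 4/d} ≤ 256 d² E(g) 𝒩(g)^{2/d}`. Hence `(‖u s‖²)^{-2/d}` grows at rate at least
`𝒩(u s)^{-2/d} / (128 d³)`, and integrating over `[1, t]` gives the bound.
-/

section IsometricAction

variable {X : Type*} [PseudoMetricSpace X] {d : ℕ} {U : V d → X → X}

/-- The displacement `x ↦ dist (U x g) g` of an isometric action is a group seminorm on `ℤ^d`,
hence bounded by the `ℓ¹` norm of `x` times its values on the unit vectors. -/
lemma dist_apply_le_sum_abs_mul (hU0 : ∀ g, U 0 g = g)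
    (hU : ∀ x y g, U (x + y) g = U x (U y g)) (hiso : ∀ x, Isometry (U x)) (g : X) {M : ℝ}
    (hM : ∀ i, dist (U (Pi.single i 1) g) g ≤ M) (x : V d) :
    dist (U x g) g ≤ ∑ i, |(x i : ℝ)| * M := by
  set N : V d → ℝ := fun x => dist (U x g) g
  have N_zero : N 0 = 0 := by simp [N, hU0]
  have N_add (x y : V d) : N (x + y) ≤ N x + N y :=
    calc N (x + y) ≤ dist (U (x + y) g) (U x g) + N x := dist_triangle _ _ _
      _ = N y + N x := by rw [hU, (hiso x).dist_eq]
      _ = N x + N y := add_comm _ _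
  have N_neg (x : V d) : N (-x) = N x :=
    calc N (-x) = dist (U x (U (-x) g)) (U x g) := ((hiso x).dist_eq _ _).symm
      _ = N x := by rw [← hU, add_neg_cancel, hU0, dist_comm]
  have N_nsmul (n : ℕ) (x : V d) : N (n • x) ≤ n * N x := by
    induction n with
    | zero => simp [N_zero]
    | succ n ih => rw [succ_nsmul]; push_cast; linarith [N_add (n • x) x]
  have N_zsmul (k : ℤ) (x : V d) : N (k • x) ≤ |(k : ℝ)| * N x := by
    obtain ⟨n, rfl | rfl⟩ := Int.eq_nat_or_neg k
    · simpa using N_nsmul n x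
    · simpa [N_neg] using N_nsmul n x
  calc N x = N (∑ i, Pi.single i (x i)) := by rw [Finset.univ_sum_single]
    _ ≤ ∑ i, N (Pi.single i (x i)) := Finset.le_sum_of_subadditive N N_zero.le N_add _ _
    _ ≤ ∑ i, |(x i : ℝ)| * M := Finset.sum_le_sum fun i _ => by
        have : Pi.single i (x i) = x i • (Pi.single i 1 : V d) := by
          rw [← Pi.single_smul, smul_eq_mul, mul_one]
        rw [this]
        exact (N_zsmul _ _).trans (mul_le_mul_of_nonneg_left (hM i) (abs_nonneg _))

end IsometricAction

lemma card_mul_norm_le {E ι : Type*} [SeminormedAddCommGroup E] [NormedSpace ℝ E]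
    (s : Finset ι) (v : ι → E) (g : E) : s.card * ‖g‖ ≤ ‖∑ i ∈ s, v i‖ + ∑ i ∈ s, ‖v i - g‖ :=
  calc s.card * ‖g‖ = ‖∑ i ∈ s, v i - ∑ i ∈ s, (v i - g)‖ := by
        rw [← Finset.sum_sub_distrib]
        simp [← Nat.cast_smul_eq_nsmul ℝ, norm_smul]
    _ ≤ ‖∑ i ∈ s, v i‖ + ‖∑ i ∈ s, (v i - g)‖ := norm_sub_le _ _
    _ ≤ ‖∑ i ∈ s, v i‖ + ∑ i ∈ s, ‖v i - g‖ := add_le_add_right (norm_sum_le _ _) _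

lemma ofReal_norm_sq_eq_lintegral {α : Type*} [MeasurableSpace α] {μ : Measure α}
    (h : Lp ℝ 2 μ) : ENNReal.ofReal (‖h‖ ^ 2) = ∫⁻ ω, ENNReal.ofReal (h ω ^ 2) ∂μ := by
  have hsq : ‖h‖ ^ 2 = ∫ ω, h ω ^ 2 ∂μ := by
    rw [← real_inner_self_eq_norm_sq, L2.inner_def]
    simp [sq]
  rw [hsq, ofReal_integral_eq_lintegral_ofReal]
  · exact (L2.integrable_inner (𝕜 := ℝ) h h).congr (ae_of_all _ fun ω => by simp [sq])
  · exact ae_of_all _ fun ω => sq_nonneg _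

lemma inner_sub_self_of_norm_eq {F : Type*} [NormedAddCommGroup F] [InnerProductSpace ℝ F]
    {v g : F} (h : ‖v‖ = ‖g‖) : inner ℝ (v - g) g = -(‖v - g‖ ^ 2 / 2) := by
  rw [norm_sub_sq_real, h, inner_sub_left, real_inner_self_eq_norm_sq]
  ring

section OperatorExponential

variable {E : Type*} [NormedAddCommGroup E] [NormedSpace ℝ E] [CompleteSpace E] (A : E →L[ℝ] E)

lemma hasDerivAt_exp_smul_apply (x : E) (s : ℝ) :
    HasDerivAt (fun s : ℝ => NormedSpace.exp (s • A) x) (A (NormedSpace.exp (s • A) x)) s := by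
  simpa using (hasDerivAt_exp_smul_const' A s).clm_apply (hasDerivAt_const s x)

lemma exp_apply_ne_zero {x : E} (hx : x ≠ 0) : NormedSpace.exp A x ≠ 0 := by
  obtain ⟨B, hB⟩ := (NormedSpace.isUnit_exp_of_mem_ball (𝕂 := ℝ) <|
    (NormedSpace.expSeries_radius_eq_top ℝ (E →L[ℝ] E)).symm ▸ edist_lt_top A 0).exists_left_inv
  intro h
  apply hx
  simpa [h] using (congrArg (· x) hB).symm

end OperatorExponential

/-- The witness is `n = ⌈(4N / y²)^{1/d}⌉`. -/
lemma exists_nat_sqrt_div_le_half {d : ℕ} (hd : 1 ≤ d) {y N : ℝ} (hy : 0 < y)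
    (hyN : y ^ 2 ≤ N) :
    ∃ n : ℕ, √(N / (2 * n + 1) ^ d) ≤ y / 2 ∧ (n : ℝ) ^ 2 ≤ 4 * (4 * N / y ^ 2) ^ (2 / (d : ℝ)) := by
  set r := 4 * N / y ^ 2
  have hr : 1 ≤ r := by rw [le_div_iff₀ (by positivity)]; linarith [sq_nonneg y]
  set a := r ^ (d : ℝ)⁻¹
  have ha : 1 ≤ a := Real.one_le_rpow hr (by positivity)
  have had : a ^ d = r := Real.rpow_inv_natCast_pow (by positivity) (by omega)
  have han : a ≤ ⌈a⌉₊ := Nat.le_ceil a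
  have hna : (⌈a⌉₊ : ℝ) ≤ 2 * a := by linarith [Nat.ceil_lt_add_one (by linarith : 0 ≤ a)]
  refine ⟨⌈a⌉₊, Real.sqrt_le_iff.2 ⟨by positivity, ?_⟩, ?_⟩
  · have hra : r ≤ (2 * ⌈a⌉₊ + 1) ^ d := had ▸ pow_le_pow_left₀ (by linarith) (by linarith) d
    rw [div_le_iff₀ (by positivity)]
    calc N = y ^ 2 / 4 * r := by simp only [r]; field_simp
      _ ≤ (y / 2) ^ 2 * (2 * ⌈a⌉₊ + 1) ^ d := by rw [div_pow]; norm_num; gcongr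
  · calc (⌈a⌉₊ : ℝ) ^ 2 ≤ (2 * a) ^ 2 := by gcongr
      _ = 4 * r ^ (2 / (d : ℝ)) := by
        rw [mul_pow, ← Real.rpow_natCast a, ← Real.rpow_mul (by positivity)]
        norm_num [div_eq_inv_mul]

lemma sq_rpow_le_of_forall_le_sqrt_add {d : ℕ} (hd : 1 ≤ d) {y N D : ℝ} (hy : 0 ≤ y)
    (hN : 0 ≤ N) (hD : 0 ≤ D) (h : ∀ n : ℕ, y ≤ √(N / (2 * n + 1) ^ d) + d * n * √D) :
    (y ^ 2) ^ (1 + 2 / (d : ℝ)) ≤ 256 * d ^ 2 * D * N ^ (2 / (d : ℝ)) := by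
  have hdR : (0 : ℝ) < d := by exact_mod_cast hd
  rcases hy.eq_or_lt with rfl | hy
  · rw [sq, zero_mul, Real.zero_rpow (by positivity)]
    positivity
  have hyN : y ^ 2 ≤ N := (Real.le_sqrt hy.le hN).1 (by simpa using h 0)
  obtain ⟨n, hfirst, hn⟩ := exists_nat_sqrt_div_le_half hd hy hyN
  have hy2 : y ^ 2 ≤ 16 * d ^ 2 * D * (4 * N / y ^ 2) ^ (2 / (d : ℝ)) := by
    have hyn : y ≤ 2 * (d * n * √D) := by linarith [h n]
    calc y ^ 2 ≤ (2 * (d * n * √D)) ^ 2 := pow_le_pow_left₀ hy.le hyn 2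
      _ = 4 * d ^ 2 * D * n ^ 2 := by rw [mul_pow, mul_pow, mul_pow, Real.sq_sqrt hD]; ring
      _ ≤ 4 * d ^ 2 * D * (4 * (4 * N / y ^ 2) ^ (2 / (d : ℝ))) := by gcongr
      _ = 16 * d ^ 2 * D * (4 * N / y ^ 2) ^ (2 / (d : ℝ)) := by ring
  have h4 : (4 : ℝ) ^ (2 / (d : ℝ)) ≤ 16 := by
    calc (4 : ℝ) ^ (2 / (d : ℝ)) ≤ 4 ^ (2 : ℝ) :=
          Real.rpow_le_rpow_of_exponent_le (by norm_num) (div_le_self zero_le_two (by simpa))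
      _ = 16 := by norm_num
  calc (y ^ 2) ^ (1 + 2 / (d : ℝ)) = y ^ 2 * (y ^ 2) ^ (2 / (d : ℝ)) := by
        rw [Real.rpow_add (by positivity), Real.rpow_one]
    _ ≤ 16 * d ^ 2 * D * (4 * N / y ^ 2) ^ (2 / (d : ℝ)) * (y ^ 2) ^ (2 / (d : ℝ)) := by
        gcongr
    _ = 16 * d ^ 2 * D * (4 : ℝ) ^ (2 / (d : ℝ)) * N ^ (2 / (d : ℝ)) := by
        rw [mul_assoc _ (_ ^ _), ← Real.mul_rpow (by positivity) (by positivity),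
          mul_assoc _ ((4 : ℝ) ^ _), ← Real.mul_rpow (by norm_num) hN]
        field_simp
    _ ≤ 16 * d ^ 2 * D * 16 * N ^ (2 / (d : ℝ)) := by gcongr
    _ = 256 * d ^ 2 * D * N ^ (2 / (d : ℝ)) := by ring

lemma lintegral_inv_rpow_le_of_hasDerivAt {φ D : ℝ → ℝ} {M : ℝ → ℝ≥0∞} {α K a t : ℝ}
    (hα : 0 < α) (hK : 0 ≤ K) (hat : a ≤ t) (hφ : ∀ s ∈ Set.Icc a t, 0 < φ s)
    (hderiv : ∀ s ∈ Set.Icc a t, HasDerivAt φ (-D s) s) (hD : ∀ s ∈ Set.Icc a t, 0 ≤ D s)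
    (hM : ∀ s ∈ Set.Ioc a t, (M s ^ α)⁻¹ ≤ ENNReal.ofReal (K * D s / φ s ^ (1 + α))) :
    ∫⁻ s in Set.Ioc a t, (M s ^ α)⁻¹ ≤ ENNReal.ofReal (K / α * φ t ^ (-α)) := by
  set ψ' : ℝ → ℝ := fun s => α * φ s ^ (-α - 1) * D s
  have hψ : ∀ s ∈ Set.Icc a t, HasDerivAt (fun s => φ s ^ (-α)) (ψ' s) s := fun s hs => by
    convert (hderiv s hs).rpow_const (p := -α) (Or.inl (hφ s hs).ne') using 1
    ring
  have hψ'_nonneg : ∀ s ∈ Set.Icc a t, 0 ≤ ψ' s := fun s hs =>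
    mul_nonneg (mul_nonneg hα.le (Real.rpow_nonneg (hφ s hs).le _)) (hD s hs)
  have hcont : ContinuousOn (fun s => φ s ^ (-α)) (Set.Icc a t) :=
    fun s hs => (hψ s hs).continuousAt.continuousWithinAt
  have hint : IntegrableOn ψ' (Set.Ioc a t) :=
    intervalIntegral.integrableOn_deriv_of_nonneg hcont
      (fun s hs => hψ s (Set.Ioo_subset_Icc_self hs))
      (fun s hs => hψ'_nonneg s (Set.Ioo_subset_Icc_self hs))
  have hftc : ∫ s in Set.Ioc a t, ψ' s = φ t ^ (-α) - φ a ^ (-α) := by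
    rw [← intervalIntegral.integral_of_le hat]
    exact intervalIntegral.integral_eq_sub_of_hasDerivAt_of_le hat hcont
      (fun s hs => hψ s (Set.Ioo_subset_Icc_self hs))
      ((intervalIntegrable_iff_integrableOn_Ioc_of_le hat).2 hint)
  have hbound : ∀ s ∈ Set.Ioc a t, K * D s / φ s ^ (1 + α) = K / α * ψ' s := fun s hs => by
    have hs' := hφ s (Set.Ioc_subset_Icc_self hs)
    simp only [ψ']
    rw [show -α - 1 = -(1 + α) by ring, Real.rpow_neg hs'.le]
    field_simp
  calc ∫⁻ s in Set.Ioc a t, (M s ^ α)⁻¹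
      ≤ ∫⁻ s in Set.Ioc a t, ENNReal.ofReal (K / α * ψ' s) :=
        setLIntegral_mono' measurableSet_Ioc fun s hs => (hM s hs).trans_eq (by rw [hbound s hs])
    _ = ENNReal.ofReal (∫ s in Set.Ioc a t, K / α * ψ' s) := by
        refine (ofReal_integral_eq_lintegral_ofReal (hint.const_mul _) ?_).symm
        filter_upwards [ae_restrict_mem measurableSet_Ioc] with s hs
        exact mul_nonneg (by positivity) (hψ'_nonneg s (Set.Ioc_subset_Icc_self hs))
    _ ≤ ENNReal.ofReal (K / α * φ t ^ (-α)) := by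
        rw [integral_const_mul, hftc]
        have := Real.rpow_nonneg (hφ a ⟨le_rfl, hat⟩).le (-α)
        gcongr
        linarith

lemma ofReal_le_mul_rpow_neg_of_le {y c α β : ℝ} {I : ℝ≥0∞} (hy : 0 < y) (hc : 0 < c)
    (hβ : 0 < β) (hαβ : α * β = 1) (hI : I ≤ ENNReal.ofReal (c * y ^ (-α))) :
    ENNReal.ofReal y ≤ ENNReal.ofReal (c ^ β) * I ^ (-β) := by
  have key : ENNReal.ofReal (c * y ^ (-α)) ^ (-β) = ENNReal.ofReal (c ^ (-β) * y) := by
    rw [ENNReal.ofReal_rpow_of_pos (by positivity), Real.mul_rpow hc.le (by positivity),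
      ← Real.rpow_mul hy.le, neg_mul_neg, hαβ, Real.rpow_one]
  calc ENNReal.ofReal y = ENNReal.ofReal (c ^ β) * ENNReal.ofReal (c ^ (-β) * y) := by
        rw [← ENNReal.ofReal_mul (by positivity), ← mul_assoc, Real.rpow_neg hc.le,
          mul_inv_cancel₀ (by positivity), one_mul]
    _ ≤ ENNReal.ofReal (c ^ β) * I ^ (-β) := by
        rw [← key, ENNReal.rpow_neg, ENNReal.rpow_neg]
        gcongr

lemma theta_zero {d : ℕ} (ω : Env d) : theta 0 ω = ω := by
  funext e
  simp [theta]

lemma theta_theta {d : ℕ} (x y : V d) (ω : Env d) : theta x (theta y ω) = theta (y + x) ω := by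
  funext e
  simp [theta, add_assoc]

lemma card_box (d n : ℕ) : (box d n).card = (2 * n + 1) ^ d := by
  simp only [box, Fintype.card_piFinset, Int.card_Icc, Finset.prod_const, Finset.card_univ,
    Fintype.card_fin]
  congr 1
  omega

lemma box_zero (d : ℕ) : box d 0 = {0} := by
  ext x
  simp only [box, Fintype.mem_piFinset, Finset.mem_Icc, Finset.mem_singleton, funext_iff]
  simp [le_antisymm_iff, and_comm]

lemma abs_le_of_mem_box {d n : ℕ} {x : V d} (hx : x ∈ box d n) (i : Fin d) : |x i| ≤ n :=
  abs_le.2 (Finset.mem_Icc.1 (Fintype.mem_piFinset.1 hx i))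

lemma ofReal_norm_sq_le_calN {d : ℕ} {P : Measure (Env d)} (g : Lp ℝ 2 P) :
    ENNReal.ofReal (‖g‖ ^ 2) ≤ calN P g := by
  have hS : Sfun d 0 g = g := funext fun ω => by simp [Sfun, box_zero, theta_zero]
  refine le_trans ?_ (le_iSup _ 0)
  rw [ofReal_norm_sq_eq_lintegral, hS, box_zero, Finset.card_singleton, Nat.cast_one, div_one]

def IsSRWGenerator {d : ℕ} (P : Measure (Env d)) (Lop : Lp ℝ 2 P →L[ℝ] Lp ℝ 2 P) : Prop :=
  ∀ g : Lp ℝ 2 P, (Lop g : Env d → ℝ) =ᵐ[P]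
    fun ω => ∑ p : Fin d × Bool, ((g : Env d → ℝ) (theta (dir p) ω) - (g : Env d → ℝ) ω)

section Translations

variable {d : ℕ} {P : Measure (Env d)} (hθ : ∀ x : V d, MeasurePreserving (theta x) P P)
  {Lop : Lp ℝ 2 P →L[ℝ] Lp ℝ 2 P}

noncomputable def transl (x : V d) : Lp ℝ 2 P →ₗᵢ[ℝ] Lp ℝ 2 P :=
  Lp.compMeasurePreservingₗᵢ ℝ (theta x) (hθ x)

lemma coeFn_transl (x : V d) (g : Lp ℝ 2 P) : transl hθ x g =ᵐ[P] fun ω => g (theta x ω) :=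
  Lp.coeFn_compMeasurePreserving g (hθ x)

lemma transl_zero (g : Lp ℝ 2 P) : transl hθ 0 g = g := by
  refine Lp.ext ((coeFn_transl hθ 0 g).trans (ae_of_all _ fun ω => ?_))
  simp only [theta_zero]

lemma transl_add (x y : V d) (g : Lp ℝ 2 P) :
    transl hθ (x + y) g = transl hθ x (transl hθ y g) := by
  have hy : (fun ω => transl hθ y g (theta x ω)) =ᵐ[P] fun ω => g (theta y (theta x ω)) :=
    (hθ x).quasiMeasurePreserving.ae_eq_comp (coeFn_transl hθ y g)
  refine Lp.ext ?_
  filter_upwards [coeFn_transl hθ (x + y) g, coeFn_transl hθ x (transl hθ y g), hy]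
    with ω hxy hx hy
  rw [hxy, hx, hy, theta_theta, add_comm]

/-- Twice the Dirichlet form `dirichlet0` of the simple random walk, written in `L²(P)`. -/
noncomputable def energy (g : Lp ℝ 2 P) : ℝ :=
  ∑ p : Fin d × Bool, ‖transl hθ (dir p) g - g‖ ^ 2

lemma energy_nonneg (g : Lp ℝ 2 P) : 0 ≤ energy hθ g :=
  Finset.sum_nonneg fun _ _ => sq_nonneg _

lemma norm_transl_single_sub_le (g : Lp ℝ 2 P) (i : Fin d) :
    ‖transl hθ (Pi.single i 1) g - g‖ ≤ √(energy hθ g) := by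
  refine Real.le_sqrt_of_sq_le ?_
  calc ‖transl hθ (Pi.single i 1) g - g‖ ^ 2 = ‖transl hθ (dir (i, true)) g - g‖ ^ 2 := by
        simp [dir]
    _ ≤ energy hθ g := Finset.single_le_sum (f := fun p => ‖transl hθ (dir p) g - g‖ ^ 2)
        (fun _ _ => sq_nonneg _) (Finset.mem_univ (i, true))

lemma norm_transl_sub_le_of_mem_box (g : Lp ℝ 2 P) {n : ℕ} {x : V d} (hx : x ∈ box d n) :
    ‖transl hθ x g - g‖ ≤ d * n * √(energy hθ g) := by
  rw [← dist_eq_norm]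
  refine (dist_apply_le_sum_abs_mul (U := fun x g => transl hθ x g) (transl_zero hθ)
    (transl_add hθ) (fun x => (transl hθ x).isometry) g
    (fun i => (dist_eq_norm _ _).trans_le (norm_transl_single_sub_le hθ g i)) x).trans ?_
  calc ∑ i, |(x i : ℝ)| * √(energy hθ g) ≤ ∑ _i : Fin d, n * √(energy hθ g) := by
        gcongr with i
        exact_mod_cast abs_le_of_mem_box hx i
    _ = d * n * √(energy hθ g) := by simp [mul_assoc]

lemma coeFn_sum_transl (g : Lp ℝ 2 P) (n : ℕ) :
    ⇑(∑ x ∈ box d n, transl hθ x g) =ᵐ[P] Sfun d n g := by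
  have hall : ∀ᵐ ω ∂P, ∀ x ∈ box d n, transl hθ x g ω = g (theta x ω) :=
    (ae_ball_iff (box d n).countable_toSet).2 fun x _ => coeFn_transl hθ x g
  filter_upwards [Lp.coeFn_fun_finsetSum (box d n) fun x => transl hθ x g, hall] with ω hsum hx
  rw [hsum, Sfun]
  exact Finset.sum_congr rfl hx

lemma ofReal_norm_sum_transl_sq_le (g : Lp ℝ 2 P) (n : ℕ) :
    ENNReal.ofReal (‖∑ x ∈ box d n, transl hθ x g‖ ^ 2) ≤ calN P g * (box d n).card := by
  have hcard : ((box d n).card : ℝ≥0∞) ≠ 0 := by simp [card_box]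
  rw [← ENNReal.div_le_iff hcard (ENNReal.natCast_ne_top _), ofReal_norm_sq_eq_lintegral,
    lintegral_congr_ae ((coeFn_sum_transl hθ g n).mono fun ω h => by rw [h])]
  exact le_iSup (fun n => (∫⁻ ω, ENNReal.ofReal (Sfun d n g ω ^ 2) ∂P) / (box d n).card) n

lemma nash_inequality (hd : 1 ≤ d) (g : Lp ℝ 2 P) (hN : calN P g ≠ ⊤) :
    (‖g‖ ^ 2) ^ (1 + 2 / (d : ℝ)) ≤
      256 * d ^ 2 * energy hθ g * (calN P g).toReal ^ (2 / (d : ℝ)) := by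
  refine sq_rpow_le_of_forall_le_sqrt_add hd (norm_nonneg g) ENNReal.toReal_nonneg
    (energy_nonneg hθ g) fun n => ?_
  set N := (calN P g).toReal
  set c : ℝ := ((box d n).card : ℝ)
  have hc : c = (2 * n + 1) ^ d := by simp [c, card_box]
  have hc0 : 0 < c := hc ▸ by positivity
  have hsum : ‖∑ x ∈ box d n, transl hθ x g‖ ≤ c * √(N / c) := by
    have hNc : N * c = c ^ 2 * (N / c) := by field_simp
    rw [show c * √(N / c) = √(N * c) by
        rw [hNc, Real.sqrt_mul (sq_nonneg _), Real.sqrt_sq hc0.le],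
      Real.le_sqrt (norm_nonneg _) (by positivity), ← ENNReal.ofReal_le_ofReal_iff (by positivity),
      ENNReal.ofReal_mul ENNReal.toReal_nonneg, ENNReal.ofReal_toReal hN, ENNReal.ofReal_natCast]
    exact ofReal_norm_sum_transl_sq_le hθ g n
  have hdisp : ∑ x ∈ box d n, ‖transl hθ x g - g‖ ≤ c * (d * n * √(energy hθ g)) := by
    grw [Finset.sum_le_sum fun x hx => norm_transl_sub_le_of_mem_box hθ g hx]
    simp [c]
  rw [← hc]
  refine le_of_mul_le_mul_left ?_ hc0
  linarith [card_mul_norm_le (box d n) (fun x => transl hθ x g) g]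

lemma inv_calN_rpow_le (hd : 1 ≤ d) {g : Lp ℝ 2 P} (hg : g ≠ 0) :
    (calN P g ^ (2 / (d : ℝ)))⁻¹ ≤
      ENNReal.ofReal (256 * d ^ 2 * energy hθ g / (‖g‖ ^ 2) ^ (1 + 2 / (d : ℝ))) := by
  have hα : (0 : ℝ) < 2 / d := by positivity
  by_cases hN : calN P g = ⊤
  · simp [hN, ENNReal.top_rpow_of_pos hα]
  have hg2 : 0 < ‖g‖ ^ 2 := by positivity
  have hNpos : 0 < (calN P g).toReal :=
    hg2.trans_le (ENNReal.ofReal_le_iff_le_toReal hN |>.1 (ofReal_norm_sq_le_calN g))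
  rw [← ENNReal.ofReal_toReal hN, ENNReal.ofReal_rpow_of_pos hNpos,
    ← ENNReal.ofReal_inv_of_pos (by positivity)]
  refine ENNReal.ofReal_le_ofReal ?_
  rw [le_div_iff₀ (by positivity), inv_mul_le_iff₀ (by positivity)]
  linarith [nash_inequality hθ hd g hN]

lemma inner_generator_self (hLop : IsSRWGenerator P Lop) (g : Lp ℝ 2 P) :
    inner ℝ (Lop g) g = -(energy hθ g / 2) := by
  have hLg : Lop g = ∑ p, (transl hθ (dir p) g - g) := by
    have hall : ∀ᵐ ω ∂P, ∀ p, (transl hθ (dir p) g - g) ω = g (theta (dir p) ω) - g ω :=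
      ae_all_iff.2 fun p => by
        filter_upwards [Lp.coeFn_sub (transl hθ (dir p) g) g, coeFn_transl hθ (dir p) g]
          with ω hsub htr
        rw [hsub, Pi.sub_apply, htr]
    refine Lp.ext ?_
    filter_upwards [hLop g, Lp.coeFn_fun_finsetSum Finset.univ fun p => transl hθ (dir p) g - g,
      hall] with ω hL hsum hp
    rw [hL, hsum]
    exact Finset.sum_congr rfl fun p _ => (hp p).symm
  rw [hLg, sum_inner, energy, Finset.sum_div, ← Finset.sum_neg_distrib]
  exact Finset.sum_congr rfl fun p _ =>
    inner_sub_self_of_norm_eq ((transl hθ (dir p)).norm_map g)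

lemma hasDerivAt_norm_sq_exp_smul_apply (hLop : IsSRWGenerator P Lop) (F : Lp ℝ 2 P)
    (s : ℝ) :
    HasDerivAt (fun s : ℝ => ‖NormedSpace.exp (s • Lop) F‖ ^ 2)
      (-energy hθ (NormedSpace.exp (s • Lop) F)) s := by
  have := (hasDerivAt_exp_smul_apply Lop F s).norm_sq
  rwa [real_inner_comm, inner_generator_self hθ hLop, mul_neg,
    mul_div_cancel₀ _ two_ne_zero] at this

end Translations

/-- For every `d ≥ 1` there is `C > 0` (depending only on `d`) such that for every law `ℙ`
as in the setting, denoting by `L°` the generator of the environment viewed by the simple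
random walk and `f°_s = exp(sL°) f`, one has for every `0 ≠ f ∈ L²(ℙ)` and `t ≥ 1`:
`𝔼[(f°_t)²] ≤ C (∫₁ᵗ 𝒩′(f°_s)^{-2/d} ds)^{-d/2}`, where `𝒩′(g) = max (𝒩(g)) (𝔼[f²])`. -/
theorem variance_decay_general_simple_rw :
    ∀ d : ℕ, 1 ≤ d → ∃ C : ℝ, 0 < C ∧
      ∀ (P : Measure (Env d)), IsProbabilityMeasure P →
        (∀ x : V d, MeasurePreserving (theta x) P P) →
        (∀ᵐ ω ∂P, ∀ e : Edge d, 1 ≤ ω e) →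
        ∀ Lop : Lp ℝ 2 P →L[ℝ] Lp ℝ 2 P,
          (∀ g : Lp ℝ 2 P,
            (Lop g : Env d → ℝ) =ᵐ[P]
              fun ω => ∑ p : Fin d × Bool,
                ((g : Env d → ℝ) (theta (dir p) ω) - (g : Env d → ℝ) ω)) →
          ∀ F : Lp ℝ 2 P, F ≠ 0 → ∀ t : ℝ, 1 ≤ t →
            ENNReal.ofReal (‖NormedSpace.exp (t • Lop) F‖ ^ 2) ≤
              ENNReal.ofReal C *
                (∫⁻ s in Set.Ioc (1 : ℝ) t,
                    (max (calN P (NormedSpace.exp (s • Lop) F : Lp ℝ 2 P))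
                        (ENNReal.ofReal (‖F‖ ^ 2)) ^ ((2 : ℝ) / d))⁻¹) ^ (-(d : ℝ) / 2) := by
  intro d hd
  have hα : (0 : ℝ) < 2 / d := by positivity
  refine ⟨(256 * d ^ 2 / (2 / d)) ^ ((d : ℝ) / 2), by positivity, ?_⟩
  intro P _ hθ _ Lop hLop F hF t ht
  have hu : ∀ s : ℝ, 0 < ‖NormedSpace.exp (s • Lop) F‖ ^ 2 := fun s =>
    pow_pos (norm_pos_iff.2 (exp_apply_ne_zero _ hF)) 2
  rw [neg_div]
  refine ofReal_le_mul_rpow_neg_of_le (α := 2 / d) (hu t) (by positivity) (by positivity)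
    (by field_simp) ?_
  exact lintegral_inv_rpow_le_of_hasDerivAt hα (by positivity) ht (fun s _ => hu s)
    (fun s _ => hasDerivAt_norm_sq_exp_smul_apply hθ hLop F s)
    (fun s _ => energy_nonneg hθ _) fun s _ =>
      (ENNReal.inv_le_inv.2 (ENNReal.rpow_le_rpow (le_max_left _ _) hα.le)).trans
        (inv_calN_rpow_le hθ hd (exp_apply_ne_zero _ hF))

end RWRC
end

section
/- Let e be a finite Borel measure on [0, ∞) and let α > 1. The following two statements are equivalent: (1) there exists C > 0 such that for all t > 0, ∫ e^{−λ t} de(λ) ≤ C / t^{α}; (2) there exists C > 0 such that for all δ > 0, ∫_{[0,δ]} λ^{−1} de(λ) ≤ C δ^{α − 1}. -/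
open MeasureTheory ENNReal
open scoped ENNReal

section LaplaceAux

open Set Filter
private lemma ae_nonneg' (e : Measure ℝ) (he : e (Set.Iio 0) = 0) : ∀ᵐ l ∂e, 0 ≤ l := by
  rw [MeasureTheory.ae_iff]
  convert he using 2
  ext l
  simp [Set.mem_Iio, not_le]

private lemma lintegral_exp_ne_top (e : Measure ℝ) [IsFiniteMeasure e] (he : e (Set.Iio 0) = 0)
    (t : ℝ) (ht : 0 ≤ t) :
    ∫⁻ l, ENNReal.ofReal (Real.exp (-l * t)) ∂e ≠ ⊤ := by
  have hb : ∀ᵐ l ∂e, ENNReal.ofReal (Real.exp (-l * t)) ≤ 1 := by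
    filter_upwards [ae_nonneg' e he] with l hl
    have h1 : Real.exp (-l * t) ≤ 1 := by
      rw [Real.exp_le_one_iff]
      nlinarith
    calc ENNReal.ofReal (Real.exp (-l * t)) ≤ ENNReal.ofReal 1 := ENNReal.ofReal_le_ofReal h1
      _ = 1 := ENNReal.ofReal_one
  have h2 := lintegral_mono_ae hb
  rw [lintegral_one] at h2
  exact ne_top_of_le_ne_top (measure_ne_top e _) h2

private lemma integral_eq_toReal (e : Measure ℝ) (t : ℝ) :
    ∫ l, Real.exp (-l * t) ∂e
      = (∫⁻ l, ENNReal.ofReal (Real.exp (-l * t)) ∂e).toReal :=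
  integral_eq_lintegral_of_nonneg_ae (Filter.Eventually.of_forall fun l => (Real.exp_pos _).le)
    (Continuous.aestronglyMeasurable (by fun_prop))

private lemma tail_of_laplace (e : Measure ℝ) [IsFiniteMeasure e]
    (α : ℝ) (C : ℝ)
    (h : ∀ t : ℝ, 0 < t → ∫⁻ l, ENNReal.ofReal (Real.exp (-l * t)) ∂e
        ≤ ENNReal.ofReal (C / t ^ α))
    (x : ℝ) (hx : 0 < x) :
    e (Set.Icc 0 x) ≤ ENNReal.ofReal (Real.exp 1 * C * x ^ α) := by
  have hx' : (0:ℝ) < x⁻¹ := inv_pos.mpr hx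
  have key : ENNReal.ofReal (Real.exp (-1)) * e (Set.Icc 0 x)
      ≤ ENNReal.ofReal (C / (x⁻¹) ^ α) := by
    calc ENNReal.ofReal (Real.exp (-1)) * e (Set.Icc 0 x)
        = ∫⁻ _l in Set.Icc 0 x, ENNReal.ofReal (Real.exp (-1)) ∂e :=
          (setLIntegral_const _ _).symm
      _ ≤ ∫⁻ l in Set.Icc 0 x, ENNReal.ofReal (Real.exp (-l * x⁻¹)) ∂e := by
          apply setLIntegral_mono (by fun_prop)
          intro l hl
          apply ENNReal.ofReal_le_ofReal
          apply Real.exp_le_exp.mpr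
          have h1 : l * x⁻¹ ≤ x * x⁻¹ := mul_le_mul_of_nonneg_right hl.2 hx'.le
          rw [mul_inv_cancel₀ hx.ne'] at h1
          nlinarith
      _ ≤ ∫⁻ l, ENNReal.ofReal (Real.exp (-l * x⁻¹)) ∂e := setLIntegral_le_lintegral _ _
      _ ≤ ENNReal.ofReal (C / (x⁻¹) ^ α) := h _ hx'
  have hrw : C / (x⁻¹) ^ α = C * x ^ α := by
    rw [Real.inv_rpow hx.le]; field_simp
  have hcancel : ENNReal.ofReal (Real.exp 1) * ENNReal.ofReal (Real.exp (-1)) = 1 := by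
    rw [← ENNReal.ofReal_mul (Real.exp_pos 1).le, ← Real.exp_add]
    norm_num
  calc e (Set.Icc 0 x)
      = ENNReal.ofReal (Real.exp 1) * ENNReal.ofReal (Real.exp (-1)) * e (Set.Icc 0 x) := by
        rw [hcancel, one_mul]
    _ = ENNReal.ofReal (Real.exp 1) * (ENNReal.ofReal (Real.exp (-1)) * e (Set.Icc 0 x)) := by
        ring
    _ ≤ ENNReal.ofReal (Real.exp 1) * ENNReal.ofReal (C / (x⁻¹) ^ α) := mul_le_mul_right key _
    _ = ENNReal.ofReal (Real.exp 1 * C * x ^ α) := by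
        rw [hrw, ← ENNReal.ofReal_mul (Real.exp_pos 1).le]
        ring_nf

private lemma tail_of_spectral (e : Measure ℝ) [IsFiniteMeasure e]
    (α : ℝ) (hα : 1 < α) (C : ℝ)
    (h : ∀ δ : ℝ, 0 < δ → ∫⁻ l in Set.Icc (0 : ℝ) δ, (ENNReal.ofReal l)⁻¹ ∂e ≤
        ENNReal.ofReal (C * δ ^ (α - 1)))
    (x : ℝ) (hx : 0 < x) :
    e (Set.Icc 0 x) ≤ ENNReal.ofReal (C * x ^ α) := by
  have hxx : x * x ^ (α - 1) = x ^ α := by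
    have h1 := Real.rpow_add hx 1 (α - 1)
    rw [Real.rpow_one] at h1
    rw [← h1]
    norm_num
  calc e (Set.Icc 0 x) = ∫⁻ _l in Set.Icc (0:ℝ) x, 1 ∂e := (setLIntegral_one _).symm
    _ ≤ ∫⁻ l in Set.Icc (0:ℝ) x, ENNReal.ofReal x * (ENNReal.ofReal l)⁻¹ ∂e := by
        apply setLIntegral_mono (by fun_prop)
        intro l hl
        have h1 : (ENNReal.ofReal x)⁻¹ ≤ (ENNReal.ofReal l)⁻¹ :=
          ENNReal.inv_le_inv' (ENNReal.ofReal_le_ofReal hl.2)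
        calc (1:ℝ≥0∞) = ENNReal.ofReal x * (ENNReal.ofReal x)⁻¹ :=
              (ENNReal.mul_inv_cancel (ENNReal.ofReal_pos.mpr hx).ne' ENNReal.ofReal_ne_top).symm
          _ ≤ _ := mul_le_mul_right h1 _
    _ = ENNReal.ofReal x * ∫⁻ l in Set.Icc (0:ℝ) x, (ENNReal.ofReal l)⁻¹ ∂e :=
        lintegral_const_mul _ (by fun_prop)
    _ ≤ ENNReal.ofReal x * ENNReal.ofReal (C * x ^ (α - 1)) := mul_le_mul_right (h x hx) _
    _ = ENNReal.ofReal (C * x ^ α) := by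
        rw [← ENNReal.ofReal_mul hx.le]
        congr 1
        rw [← hxx]
        ring

private lemma measure_singleton_zero (e : Measure ℝ) [IsFiniteMeasure e]
    (α : ℝ) (hα : 0 < α) (K : ℝ) (hK : 0 < K)
    (htail : ∀ x : ℝ, 0 < x → e (Set.Icc 0 x) ≤ ENNReal.ofReal (K * x ^ α)) :
    e {0} = 0 := by
  by_contra h0
  have hfin : e {0} ≠ ⊤ := measure_ne_top e _
  set m := (e {0}).toReal with hm
  have hmpos : 0 < m := ENNReal.toReal_pos h0 hfin
  set x := (m / (2 * K)) ^ α⁻¹ with hxdef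
  have hxpos : 0 < x := Real.rpow_pos_of_pos (by positivity) _
  have hxα : x ^ α = m / (2 * K) := by
    rw [hxdef, ← Real.rpow_mul (by positivity), inv_mul_cancel₀ (by positivity : α ≠ 0),
      Real.rpow_one]
  have hsub : ({0} : Set ℝ) ⊆ Set.Icc 0 x := by
    intro y hy
    simp only [Set.mem_singleton_iff] at hy
    simp [hy, hxpos.le]
  have h1 : e {0} ≤ ENNReal.ofReal (K * x ^ α) :=
    le_trans (measure_mono hsub) (htail x hxpos)
  rw [hxα] at h1
  have h2 : K * (m / (2 * K)) = m / 2 := by field_simp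
  rw [h2] at h1
  have h3 : (e {0}).toReal ≤ m / 2 := by
    calc (e {0}).toReal ≤ (ENNReal.ofReal (m / 2)).toReal :=
          ENNReal.toReal_mono ENNReal.ofReal_ne_top h1
      _ = m / 2 := ENNReal.toReal_ofReal (by positivity)
  rw [← hm] at h3
  linarith

private lemma dyadic_calc (K δ α : ℝ) (hδ : 0 < δ) :
    ∀ j : ℕ, (δ / 2 ^ (j + 1))⁻¹ * (K * (δ / 2 ^ j) ^ α)
      = (2 * K * δ ^ (α - 1)) * ((2:ℝ) ^ (1 - α)) ^ j := by
  intro j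
  induction j with
  | zero =>
    simp only [pow_zero, pow_one, div_one]
    rw [Real.rpow_sub hδ, Real.rpow_one]
    field_simp
    ring
  | succ n ih =>
    have h2 : ((2:ℝ) ^ (1 - α)) = 2 * ((2:ℝ) ^ α)⁻¹ := by
      rw [Real.rpow_sub (by norm_num), Real.rpow_one, div_eq_mul_inv]
    have hpow : (0:ℝ) < 2 ^ n := by positivity
    have hpow1 : (0:ℝ) < 2 ^ (n + 1) := by positivity
    have e1 : (δ / 2 ^ (n + 1 + 1))⁻¹ = 2 * (δ / 2 ^ (n + 1))⁻¹ := by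
      rw [pow_succ]
      field_simp
    have e2 : (δ / 2 ^ (n + 1)) ^ α = (δ / 2 ^ n) ^ α * ((2:ℝ) ^ α)⁻¹ := by
      have hstep : δ / 2 ^ (n + 1) = (δ / 2 ^ n) / 2 := by rw [pow_succ]; ring
      rw [hstep, Real.div_rpow (by positivity) (by norm_num), div_eq_mul_inv]
    calc (δ / 2 ^ (n + 1 + 1))⁻¹ * (K * (δ / 2 ^ (n + 1)) ^ α)
        = (2 * ((2:ℝ) ^ α)⁻¹) * ((δ / 2 ^ (n + 1))⁻¹ * (K * (δ / 2 ^ n) ^ α)) := by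
          rw [e1, e2]; ring
      _ = (2 * K * δ ^ (α - 1)) * ((2:ℝ) ^ (1 - α)) ^ (n + 1) := by
          rw [ih, pow_succ, h2]; ring

private lemma forward_main (e : Measure ℝ) [IsFiniteMeasure e]
    (α : ℝ) (hα : 1 < α) (K : ℝ) (hK : 0 < K)
    (htail : ∀ x : ℝ, 0 < x → e (Set.Icc 0 x) ≤ ENNReal.ofReal (K * x ^ α))
    (h0 : e {0} = 0) (δ : ℝ) (hδ : 0 < δ) :
    ∫⁻ l in Set.Icc (0 : ℝ) δ, (ENNReal.ofReal l)⁻¹ ∂e ≤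
      ENNReal.ofReal ((2 * K / (1 - (2:ℝ) ^ (1 - α))) * δ ^ (α - 1)) := by
  set r : ℝ := (2:ℝ) ^ (1 - α) with hr
  have hr0 : 0 < r := Real.rpow_pos_of_pos (by norm_num) _
  have hr1 : r < 1 := Real.rpow_lt_one_of_one_lt_of_neg (by norm_num) (by linarith)
  set S : ℕ → Set ℝ := fun j => Set.Ioc (δ / 2 ^ (j + 1)) (δ / 2 ^ j) with hS
  have hsub : Set.Icc (0:ℝ) δ ⊆ {0} ∪ ⋃ j, S j := by
    rintro l ⟨hl0, hlδ⟩
    rcases eq_or_lt_of_le hl0 with h | h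
    · exact Or.inl (by simp [← h])
    · refine Or.inr (Set.mem_iUnion.mpr ?_)
      have hex : ∃ n, δ / 2 ^ (n + 1) < l := by
        obtain ⟨n, hn⟩ := pow_unbounded_of_one_lt (δ / l) (by norm_num : (1:ℝ) < 2)
        refine ⟨n, ?_⟩
        rw [div_lt_iff₀ (by positivity)]
        rw [div_lt_iff₀ h] at hn
        have h2 : (2:ℝ) ^ n ≤ 2 ^ (n + 1) := by
          apply pow_le_pow_right₀ (by norm_num)
          omega
        nlinarith
      refine ⟨Nat.find hex, Nat.find_spec hex, ?_⟩
      rcases Nat.eq_zero_or_pos (Nat.find hex) with hj0 | hj0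
      · rw [hj0]; simpa using hlδ
      · have hmin := Nat.find_min hex (m := Nat.find hex - 1) (by omega)
        push_neg at hmin
        have hj1 : Nat.find hex - 1 + 1 = Nat.find hex := by omega
        rwa [hj1] at hmin
  calc ∫⁻ l in Set.Icc (0:ℝ) δ, (ENNReal.ofReal l)⁻¹ ∂e
      ≤ ∫⁻ l in ({0} ∪ ⋃ j, S j : Set ℝ), (ENNReal.ofReal l)⁻¹ ∂e := lintegral_mono_set hsub
    _ ≤ (∫⁻ l in ({0} : Set ℝ), (ENNReal.ofReal l)⁻¹ ∂e)
        + ∫⁻ l in ⋃ j, S j, (ENNReal.ofReal l)⁻¹ ∂e := lintegral_union_le _ _ _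
    _ = ∫⁻ l in ⋃ j, S j, (ENNReal.ofReal l)⁻¹ ∂e := by
        rw [setLIntegral_measure_zero _ _ h0, zero_add]
    _ ≤ ∑' j, ∫⁻ l in S j, (ENNReal.ofReal l)⁻¹ ∂e := lintegral_iUnion_le _ _
    _ ≤ ∑' j, ENNReal.ofReal ((2 * K * δ ^ (α - 1)) * r ^ j) := by
        apply ENNReal.tsum_le_tsum
        intro j
        have hpos : (0:ℝ) < δ / 2 ^ (j + 1) := by positivity
        have hstep : ∫⁻ l in S j, (ENNReal.ofReal l)⁻¹ ∂e
            ≤ (ENNReal.ofReal (δ / 2 ^ (j + 1)))⁻¹ * e (S j) := by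
          calc ∫⁻ l in S j, (ENNReal.ofReal l)⁻¹ ∂e
              ≤ ∫⁻ _l in S j, (ENNReal.ofReal (δ / 2 ^ (j + 1)))⁻¹ ∂e := by
                apply setLIntegral_mono measurable_const
                intro l hl
                exact ENNReal.inv_le_inv' (ENNReal.ofReal_le_ofReal hl.1.le)
            _ = _ := setLIntegral_const _ _
        have hmeas : e (S j) ≤ ENNReal.ofReal (K * (δ / 2 ^ j) ^ α) := by
          refine le_trans (measure_mono ?_) (htail (δ / 2 ^ j) (by positivity))
          intro l hl
          exact ⟨le_trans hpos.le hl.1.le, hl.2⟩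
        calc ∫⁻ l in S j, (ENNReal.ofReal l)⁻¹ ∂e
            ≤ (ENNReal.ofReal (δ / 2 ^ (j + 1)))⁻¹ * ENNReal.ofReal (K * (δ / 2 ^ j) ^ α) :=
              le_trans hstep (mul_le_mul_right hmeas _)
          _ = ENNReal.ofReal ((δ / 2 ^ (j + 1))⁻¹ * (K * (δ / 2 ^ j) ^ α)) := by
              rw [← ENNReal.ofReal_inv_of_pos hpos,
                ← ENNReal.ofReal_mul (by positivity : (0:ℝ) ≤ (δ / 2 ^ (j + 1))⁻¹)]
          _ = ENNReal.ofReal ((2 * K * δ ^ (α - 1)) * r ^ j) := by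
              rw [dyadic_calc K δ α hδ j]
    _ = ENNReal.ofReal (2 * K * δ ^ (α - 1)) * ∑' j, (ENNReal.ofReal r) ^ j := by
        rw [← ENNReal.tsum_mul_left]
        congr 1
        funext j
        rw [ENNReal.ofReal_mul (by positivity), ENNReal.ofReal_pow hr0.le]
    _ = ENNReal.ofReal (2 * K * δ ^ (α - 1)) * (1 - ENNReal.ofReal r)⁻¹ := by
        rw [ENNReal.tsum_geometric]
    _ = ENNReal.ofReal ((2 * K / (1 - r)) * δ ^ (α - 1)) := by
        have h1r : (0:ℝ) < 1 - r := by linarith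
        rw [← ENNReal.ofReal_one, ← ENNReal.ofReal_sub _ hr0.le,
          ← ENNReal.ofReal_inv_of_pos h1r, ← ENNReal.ofReal_mul (by positivity)]
        congr 1
        field_simp

private lemma summable_aux (n : ℕ) :
    Summable (fun k : ℕ => ((k:ℝ) + 1) ^ n * Real.exp (-1) ^ k) := by
  have h1 : ‖Real.exp (-1)‖ < 1 := by
    rw [Real.norm_eq_abs, abs_of_pos (Real.exp_pos _)]
    calc Real.exp (-1) < Real.exp 0 := Real.exp_lt_exp.mpr (by norm_num)
      _ = 1 := Real.exp_zero
  have h2 := summable_pow_mul_geometric_of_norm_lt_one n h1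
  have h3 : Summable (fun k : ℕ => ((k:ℝ) + 1) ^ n * Real.exp (-1) ^ (k + 1)) := by
    have h4 := (summable_nat_add_iff 1).mpr h2
    refine h4.congr fun k => ?_
    push_cast
    ring
  have h5 := h3.mul_left (Real.exp (-1))⁻¹
  refine h5.congr fun k => ?_
  rw [pow_succ]
  have hne : Real.exp (-1) ≠ 0 := (Real.exp_pos _).ne'
  field_simp

private lemma backward_main (e : Measure ℝ) [IsFiniteMeasure e] (he : e (Set.Iio 0) = 0)
    (α : ℝ) (hα : 1 < α) (C : ℝ) (hC : 0 < C)
    (htail : ∀ x : ℝ, 0 < x → e (Set.Icc 0 x) ≤ ENNReal.ofReal (C * x ^ α))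
    (t : ℝ) (ht : 0 < t) :
    ∫⁻ l, ENNReal.ofReal (Real.exp (-l * t)) ∂e ≤
      ENNReal.ofReal (C * (∑' k : ℕ, ((k:ℝ) + 1) ^ ⌈α⌉₊ * Real.exp (-1) ^ k) / t ^ α) := by
  set n := ⌈α⌉₊ with hn
  set g : ℕ → ℝ := fun k => ((k:ℝ) + 1) ^ n * Real.exp (-1) ^ k with hg
  have hsum : Summable g := summable_aux n
  have hsplit : ∫⁻ l, ENNReal.ofReal (Real.exp (-l * t)) ∂e
      = ∫⁻ l in Set.Ici (0:ℝ), ENNReal.ofReal (Real.exp (-l * t)) ∂e := by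
    rw [← lintegral_add_compl (fun l => ENNReal.ofReal (Real.exp (-l * t))) measurableSet_Ici
      (μ := e)]
    rw [Set.compl_Ici, setLIntegral_measure_zero _ _ he, add_zero]
  have hcover : Set.Ici (0:ℝ) ⊆ ⋃ k : ℕ, Set.Ico ((k:ℝ) / t) (((k:ℝ) + 1) / t) := by
    intro l hl
    refine Set.mem_iUnion.mpr ⟨⌊l * t⌋₊, ?_, ?_⟩
    · rw [div_le_iff₀ ht]
      exact Nat.floor_le (mul_nonneg hl ht.le)
    · rw [lt_div_iff₀ ht]
      exact_mod_cast Nat.lt_floor_add_one (l * t)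
  calc ∫⁻ l, ENNReal.ofReal (Real.exp (-l * t)) ∂e
      = ∫⁻ l in Set.Ici (0:ℝ), ENNReal.ofReal (Real.exp (-l * t)) ∂e := hsplit
    _ ≤ ∫⁻ l in ⋃ k : ℕ, Set.Ico ((k:ℝ) / t) (((k:ℝ) + 1) / t),
          ENNReal.ofReal (Real.exp (-l * t)) ∂e := lintegral_mono_set hcover
    _ ≤ ∑' k : ℕ, ∫⁻ l in Set.Ico ((k:ℝ) / t) (((k:ℝ) + 1) / t),
          ENNReal.ofReal (Real.exp (-l * t)) ∂e := lintegral_iUnion_le _ _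
    _ ≤ ∑' k : ℕ, ENNReal.ofReal (C / t ^ α) * ENNReal.ofReal (g k) := by
        apply ENNReal.tsum_le_tsum
        intro k
        have hterm1 : ∫⁻ l in Set.Ico ((k:ℝ) / t) (((k:ℝ) + 1) / t),
            ENNReal.ofReal (Real.exp (-l * t)) ∂e
            ≤ ENNReal.ofReal (Real.exp (-(k:ℝ))) * e (Set.Ico ((k:ℝ) / t) (((k:ℝ) + 1) / t)) := by
          calc ∫⁻ l in Set.Ico ((k:ℝ) / t) (((k:ℝ) + 1) / t),
              ENNReal.ofReal (Real.exp (-l * t)) ∂e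
              ≤ ∫⁻ _l in Set.Ico ((k:ℝ) / t) (((k:ℝ) + 1) / t),
                ENNReal.ofReal (Real.exp (-(k:ℝ))) ∂e := by
                apply setLIntegral_mono measurable_const
                intro l hl
                apply ENNReal.ofReal_le_ofReal
                apply Real.exp_le_exp.mpr
                have h1 : (k:ℝ) ≤ l * t := by
                  rw [← div_le_iff₀ ht]
                  exact hl.1
                linarith
            _ = _ := setLIntegral_const _ _
        have hterm2 : e (Set.Ico ((k:ℝ) / t) (((k:ℝ) + 1) / t))
            ≤ ENNReal.ofReal (C * (((k:ℝ) + 1) / t) ^ α) := by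
          refine le_trans (measure_mono ?_) (htail _ (by positivity))
          intro l hl
          exact ⟨le_trans (by positivity) hl.1, hl.2.le⟩
        have hreal : Real.exp (-(k:ℝ)) * (C * (((k:ℝ) + 1) / t) ^ α) ≤ (C / t ^ α) * g k := by
          have hexp : Real.exp (-(k:ℝ)) = Real.exp (-1) ^ k := by
            rw [← Real.exp_nat_mul]
            norm_num
          have hdiv : (((k:ℝ) + 1) / t) ^ α = ((k:ℝ) + 1) ^ α / t ^ α :=
            Real.div_rpow (by positivity) ht.le α
          have hle : ((k:ℝ) + 1) ^ α ≤ ((k:ℝ) + 1) ^ n := by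
            have h1 : ((k:ℝ) + 1) ^ α ≤ ((k:ℝ) + 1) ^ (n:ℝ) :=
              Real.rpow_le_rpow_of_exponent_le (by simp [Nat.cast_nonneg]) (Nat.le_ceil α)
            rwa [Real.rpow_natCast] at h1
          calc Real.exp (-(k:ℝ)) * (C * (((k:ℝ) + 1) / t) ^ α)
              = (C / t ^ α) * (((k:ℝ) + 1) ^ α * Real.exp (-1) ^ k) := by
                rw [hexp, hdiv]; ring
            _ ≤ (C / t ^ α) * (((k:ℝ) + 1) ^ n * Real.exp (-1) ^ k) := by
                apply mul_le_mul_of_nonneg_left _ (by positivity)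
                exact mul_le_mul_of_nonneg_right hle (by positivity)
            _ = (C / t ^ α) * g k := rfl
        calc ∫⁻ l in Set.Ico ((k:ℝ) / t) (((k:ℝ) + 1) / t),
            ENNReal.ofReal (Real.exp (-l * t)) ∂e
            ≤ ENNReal.ofReal (Real.exp (-(k:ℝ))) * ENNReal.ofReal (C * (((k:ℝ) + 1) / t) ^ α) :=
              le_trans hterm1 (mul_le_mul_right hterm2 _)
          _ = ENNReal.ofReal (Real.exp (-(k:ℝ)) * (C * (((k:ℝ) + 1) / t) ^ α)) :=
              (ENNReal.ofReal_mul (Real.exp_pos _).le).symm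
          _ ≤ ENNReal.ofReal ((C / t ^ α) * g k) := ENNReal.ofReal_le_ofReal hreal
          _ = ENNReal.ofReal (C / t ^ α) * ENNReal.ofReal (g k) :=
              ENNReal.ofReal_mul (by positivity)
    _ = ENNReal.ofReal (C / t ^ α) * ∑' k, ENNReal.ofReal (g k) := ENNReal.tsum_mul_left
    _ = ENNReal.ofReal (C / t ^ α) * ENNReal.ofReal (∑' k, g k) := by
        rw [← ENNReal.ofReal_tsum_of_nonneg (fun k => by positivity) hsum]
    _ = ENNReal.ofReal (C * (∑' k, g k) / t ^ α) := by
        rw [← ENNReal.ofReal_mul (by positivity)]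
        congr 1
        ring

end LaplaceAux

/-- **Spectral characterization of algebraic decay.** For a finite Borel measure `e` on
`[0, ∞)` and `α > 1`, the following are equivalent: (1) `∫ e^{-λt} de(λ) ≤ C/t^α` for all
`t > 0` and some `C > 0`; (2) `∫_{[0,δ]} λ⁻¹ de(λ) ≤ C δ^{α-1}` for all `δ > 0` and some
`C > 0` (with `λ⁻¹` interpreted as `+∞` at `λ = 0`). -/
theorem laplace_decay_iff_spectral_density
    (e : Measure ℝ) [IsFiniteMeasure e] (he : e (Set.Iio 0) = 0)
    (α : ℝ) (hα : 1 < α) :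
    (∃ C : ℝ, 0 < C ∧ ∀ t : ℝ, 0 < t → ∫ l, Real.exp (-l * t) ∂e ≤ C / t ^ α) ↔
    (∃ C : ℝ, 0 < C ∧ ∀ δ : ℝ, 0 < δ →
      ∫⁻ l in Set.Icc (0 : ℝ) δ, (ENNReal.ofReal l)⁻¹ ∂e ≤
        ENNReal.ofReal (C * δ ^ (α - 1))) := by
  constructor
  · rintro ⟨C, hC, h⟩
    have hL : ∀ t : ℝ, 0 < t → ∫⁻ l, ENNReal.ofReal (Real.exp (-l * t)) ∂e
        ≤ ENNReal.ofReal (C / t ^ α) := by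
      intro t ht
      have h1 := h t ht
      rw [integral_eq_toReal] at h1
      exact (ENNReal.le_ofReal_iff_toReal_le (lintegral_exp_ne_top e he t ht.le)
        (by positivity)).mpr h1
    have hKpos : 0 < Real.exp 1 * C := by positivity
    have htail : ∀ x : ℝ, 0 < x →
        e (Set.Icc 0 x) ≤ ENNReal.ofReal (Real.exp 1 * C * x ^ α) :=
      fun x hx => tail_of_laplace e α C hL x hx
    have h0 : e {0} = 0 :=
      measure_singleton_zero e α (by linarith) (Real.exp 1 * C) hKpos htail
    have hr1 : (2:ℝ) ^ (1 - α) < 1 :=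
      Real.rpow_lt_one_of_one_lt_of_neg (by norm_num) (by linarith)
    have hr2 : (0:ℝ) < 1 - (2:ℝ) ^ (1 - α) := by linarith
    refine ⟨2 * (Real.exp 1 * C) / (1 - (2:ℝ) ^ (1 - α)), by positivity, ?_⟩
    intro δ hδ
    exact forward_main e α hα (Real.exp 1 * C) hKpos htail h0 δ hδ
  · rintro ⟨C, hC, h⟩
    have htail : ∀ x : ℝ, 0 < x → e (Set.Icc 0 x) ≤ ENNReal.ofReal (C * x ^ α) :=
      fun x hx => tail_of_spectral e α hα C h x hx
    have hsum : Summable (fun k : ℕ => ((k:ℝ) + 1) ^ ⌈α⌉₊ * Real.exp (-1) ^ k) :=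
      summable_aux ⌈α⌉₊
    have hS1 : (1:ℝ) ≤ ∑' k : ℕ, ((k:ℝ) + 1) ^ ⌈α⌉₊ * Real.exp (-1) ^ k := by
      have h1 := Summable.le_tsum hsum 0 (fun j _ => by positivity)
      simpa using h1
    refine ⟨C * (∑' k : ℕ, ((k:ℝ) + 1) ^ ⌈α⌉₊ * Real.exp (-1) ^ k), by nlinarith, ?_⟩
    intro t ht
    have key := backward_main e he α hα C hC htail t ht
    rw [integral_eq_toReal]
    have hpos : 0 ≤ C * (∑' k : ℕ, ((k:ℝ) + 1) ^ ⌈α⌉₊ * Real.exp (-1) ^ k) / t ^ α :=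
      div_nonneg (by nlinarith) (by positivity)
    exact (ENNReal.le_ofReal_iff_toReal_le (lintegral_exp_ne_top e he t ht.le) hpos).mp key
end

section
/- Let e be a finite Borel measure on (0, ∞) and let α > 1. Suppose there exists C > 0 such that for all δ > 0, ∫_{(0,δ]} λ^{−1} de(λ) ≤ C δ^{α − 1}. Define I₂(μ) = ∫ μ² / (λ (λ + μ)²) de(λ) for μ > 0. Then there exists C′ > 0 such that for all μ > 0: 0 ≤ I₂(μ) ≤ C′ μ^{α − 1} if α < 3; 0 ≤ I₂(μ) ≤ C′ μ² max(1, ln(1/μ)) if α = 3; 0 ≤ I₂(μ) ≤ C′ μ² if α > 3. -/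
/-!
Split the integral at `λ = μ` and `λ = 1`. On `(0, μ]` the integrand is at most `λ⁻¹`, which the
hypothesis bounds by `C μ^(α-1)`; on `(1, ∞)` it is at most `μ²`, and `e` is finite. On `(μ, 1]` it
is at most `μ² λ⁻³`: writing `λ⁻² = 1 + ∫_λ^1 2 t⁻³ dt` and exchanging the order of integration
gives `∫_{(μ,1]} λ⁻³ de ≤ C + 2C ∫_μ^1 t^(α-4) dt`, and the three regimes are those in which this
last integral is of order `μ^(α-3)`, `log (1/μ)` and `1`. For `μ ≥ 1`, simply
`I₂(μ) ≤ ∫ λ⁻¹ de ≤ C + e(ℝ)`.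
-/

open MeasureTheory ENNReal Set

lemma sq_div_mul_add_sq_le_inv {l μ : ℝ} (hl : 0 < l) (hμ : 0 ≤ μ) :
    μ ^ 2 / (l * (l + μ) ^ 2) ≤ l⁻¹ := by
  rw [div_le_iff₀ (by positivity), inv_mul_cancel_left₀ hl.ne']
  nlinarith

lemma sq_div_mul_add_sq_le_mul_inv_pow_three {l μ : ℝ} (hl : 0 < l) (hμ : 0 ≤ μ) :
    μ ^ 2 / (l * (l + μ) ^ 2) ≤ μ ^ 2 * (l ^ 3)⁻¹ := by
  rw [← div_eq_mul_inv]
  exact div_le_div_of_nonneg_left (sq_nonneg μ) (by positivity)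
    (by nlinarith [mul_nonneg (mul_nonneg hl.le hμ) (by positivity : 0 ≤ 2 * l + μ)])

lemma ofReal_inv_sq_eq_add_lintegral {l b : ℝ} (hl : 0 < l) (hlb : l ≤ b) :
    ENNReal.ofReal (l ^ 2)⁻¹ =
      ENNReal.ofReal (b ^ 2)⁻¹ + ∫⁻ t in Ioc l b, ENNReal.ofReal (2 / t ^ 3) := by
  have hpos : ∀ t ∈ uIcc l b, 0 < t := fun t ht => hl.trans_le (by
    rw [uIcc_of_le hlb] at ht; exact ht.1)
  have hderiv : ∀ t ∈ uIcc l b, HasDerivAt (fun t : ℝ => -(t ^ 2)⁻¹) (2 / t ^ 3) t := by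
    intro t ht
    have h : HasDerivAt (fun t : ℝ => -(t ^ 2)⁻¹) _ t :=
      ((hasDerivAt_pow 2 t).inv (pow_ne_zero 2 (hpos t ht).ne')).neg
    have ht0 := (hpos t ht).ne'
    convert h using 1
    field_simp
    ring
  have hint : IntervalIntegrable (fun t : ℝ => 2 / t ^ 3) volume l b :=
    (continuousOn_const.div (continuousOn_pow 3) fun t ht =>
      pow_ne_zero 3 (hpos t ht).ne').intervalIntegrable
  have hnonneg : 0 ≤ᵐ[volume.restrict (Ioc l b)] fun t : ℝ => 2 / t ^ 3 := by
    filter_upwards [ae_restrict_mem measurableSet_Ioc] with t ht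
    have : 0 < t := hl.trans ht.1
    positivity
  rw [← ofReal_integral_eq_lintegral_ofReal
      ((intervalIntegrable_iff_integrableOn_Ioc_of_le hlb).1 hint) hnonneg,
    ← intervalIntegral.integral_of_le hlb,
    intervalIntegral.integral_eq_sub_of_hasDerivAt hderiv hint,
    ← ENNReal.ofReal_add (by positivity) (by
      rw [sub_nonneg, neg_le_neg_iff]
      exact inv_anti₀ (by positivity) (pow_le_pow_left₀ hl.le hlb 2))]
  ring_nf

lemma lintegral_Ioc_inv_pow_three_le (e : Measure ℝ) [SFinite e] {a b : ℝ} (ha : 0 < a) :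
    ∫⁻ l in Ioc a b, ENNReal.ofReal (l ^ 3)⁻¹ ∂e ≤
      (∫⁻ l in Ioc 0 b, (ENNReal.ofReal l)⁻¹ ∂e) * ENNReal.ofReal (b ^ 2)⁻¹ +
        ∫⁻ t in Ioc a b,
          (∫⁻ l in Ioc 0 t, (ENNReal.ofReal l)⁻¹ ∂e) * ENNReal.ofReal (2 / t ^ 3) := by
  set G : ℝ × ℝ → ℝ≥0∞ := {p | p.1 < p.2}.indicator
    fun p => (ENNReal.ofReal p.1)⁻¹ * ENNReal.ofReal (2 / p.2 ^ 3)
  have hG : Measurable G :=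
    (by fun_prop : Measurable _).indicator (measurableSet_lt measurable_fst measurable_snd)
  have hinv : Measurable fun l : ℝ => (ENNReal.ofReal l)⁻¹ := by fun_prop
  have hsplit : ∀ l ∈ Ioc a b, ENNReal.ofReal (l ^ 3)⁻¹ =
      (ENNReal.ofReal l)⁻¹ * ENNReal.ofReal (b ^ 2)⁻¹ + ∫⁻ t in Ioc a b, G (l, t) := by
    intro l hl
    have hl0 : 0 < l := ha.trans hl.1
    have hGl : (fun t => G (l, t)) =
        (Ioi l).indicator fun t => (ENNReal.ofReal l)⁻¹ * ENNReal.ofReal (2 / t ^ 3) := by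
      ext t
      by_cases hlt : l < t <;> simp [G, hlt]
    rw [hGl, lintegral_indicator measurableSet_Ioi, Measure.restrict_restrict measurableSet_Ioi,
      inter_comm, Ioc_inter_Ioi, sup_eq_right.2 hl.1.le, lintegral_const_mul _ (by fun_prop),
      ← mul_add, ← ofReal_inv_sq_eq_add_lintegral hl0 hl.2, ← ofReal_inv_of_pos hl0,
      ← ofReal_mul (by positivity), ← mul_inv, ← pow_succ']
  have hinner : ∀ t, ∫⁻ l in Ioc a b, G (l, t) ∂e ≤
      (∫⁻ l in Ioc 0 t, (ENNReal.ofReal l)⁻¹ ∂e) * ENNReal.ofReal (2 / t ^ 3) := by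
    intro t
    have hGt : (fun l => G (l, t)) = fun l =>
        (Iio t).indicator (fun l => (ENNReal.ofReal l)⁻¹) l * ENNReal.ofReal (2 / t ^ 3) := by
      ext l
      by_cases hlt : l < t <;> simp [G, hlt]
    rw [hGt, lintegral_mul_const _ (hinv.indicator measurableSet_Iio),
      lintegral_indicator measurableSet_Iio, Measure.restrict_restrict measurableSet_Iio]
    gcongr
    exact fun l hl => ⟨ha.trans hl.2.1, hl.1.le⟩
  calc ∫⁻ l in Ioc a b, ENNReal.ofReal (l ^ 3)⁻¹ ∂e
      = ∫⁻ l in Ioc a b,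
          ((ENNReal.ofReal l)⁻¹ * ENNReal.ofReal (b ^ 2)⁻¹ + ∫⁻ t in Ioc a b, G (l, t)) ∂e :=
        setLIntegral_congr_fun measurableSet_Ioc hsplit
    _ = (∫⁻ l in Ioc a b, (ENNReal.ofReal l)⁻¹ ∂e) * ENNReal.ofReal (b ^ 2)⁻¹ +
          ∫⁻ t in Ioc a b, ∫⁻ l in Ioc a b, G (l, t) ∂e := by
        rw [lintegral_add_left (hinv.mul_const _), lintegral_mul_const _ hinv,
          lintegral_lintegral_swap (f := fun l t => G (l, t)) hG.aemeasurable]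
    _ ≤ _ := by
        gcongr ?_ * _ + ?_
        · exact lintegral_mono_set (Ioc_subset_Ioc_left ha.le)
        · exact lintegral_mono hinner

def InvMomentBound (e : Measure ℝ) (α C : ℝ) : Prop :=
  ∀ δ : ℝ, 0 < δ →
    ∫⁻ l in Ioc (0 : ℝ) δ, (ENNReal.ofReal l)⁻¹ ∂e ≤ ENNReal.ofReal (C * δ ^ (α - 1))

lemma lintegral_Ioc_inv_pow_three_le_of_invMomentBound (e : Measure ℝ) [SFinite e]
    {α C μ : ℝ} (hC : 0 ≤ C) (h : InvMomentBound e α C) (hμ : 0 < μ) (hμ1 : μ ≤ 1) :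
    ∫⁻ l in Ioc μ 1, ENNReal.ofReal (l ^ 3)⁻¹ ∂e ≤
      ENNReal.ofReal (C + 2 * C * ∫ t in μ..1, t ^ (α - 4)) := by
  have hpos : ∀ t ∈ Ioc μ 1, 0 < t := fun t ht => hμ.trans ht.1
  have hint : IntegrableOn (fun t : ℝ => 2 * C * t ^ (α - 4)) (Ioc μ 1) := by
    refine (intervalIntegrable_iff_integrableOn_Ioc_of_le hμ1).1 (IntervalIntegrable.const_mul ?_ _)
    exact intervalIntegral.intervalIntegrable_rpow (Or.inr (notMem_uIcc_of_lt hμ one_pos))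
  have hnonneg : 0 ≤ᵐ[volume.restrict (Ioc μ 1)] fun t : ℝ => 2 * C * t ^ (α - 4) := by
    filter_upwards [ae_restrict_mem measurableSet_Ioc] with t ht
    have := Real.rpow_nonneg (hpos t ht).le (α - 4)
    positivity
  calc ∫⁻ l in Ioc μ 1, ENNReal.ofReal (l ^ 3)⁻¹ ∂e
      ≤ (∫⁻ l in Ioc 0 1, (ENNReal.ofReal l)⁻¹ ∂e) * ENNReal.ofReal ((1 : ℝ) ^ 2)⁻¹ +
          ∫⁻ t in Ioc μ 1,
            (∫⁻ l in Ioc 0 t, (ENNReal.ofReal l)⁻¹ ∂e) * ENNReal.ofReal (2 / t ^ 3) :=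
        lintegral_Ioc_inv_pow_three_le e hμ
    _ ≤ ENNReal.ofReal C + ∫⁻ t in Ioc μ 1, ENNReal.ofReal (2 * C * t ^ (α - 4)) := by
        gcongr ?_ + ?_
        · simpa using h 1 one_pos
        · refine setLIntegral_mono' measurableSet_Ioc fun t ht => ?_
          have ht0 := hpos t ht
          calc (∫⁻ l in Ioc 0 t, (ENNReal.ofReal l)⁻¹ ∂e) * ENNReal.ofReal (2 / t ^ 3)
              ≤ ENNReal.ofReal (C * t ^ (α - 1)) * ENNReal.ofReal (2 / t ^ 3) := by
                gcongr
                exact h t ht0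
            _ = ENNReal.ofReal (2 * C * t ^ (α - 4)) := by
                rw [← ofReal_mul (by positivity), show α - 4 = α - 1 - (3 : ℕ) by push_cast; ring,
                  Real.rpow_sub_natCast ht0.ne']
                congr 1
                ring
    _ = ENNReal.ofReal (C + 2 * C * ∫ t in μ..1, t ^ (α - 4)) := by
        rw [← intervalIntegral.integral_const_mul, intervalIntegral.integral_of_le hμ1,
          ofReal_add hC (integral_nonneg_of_ae hnonneg),
          ofReal_integral_eq_lintegral_ofReal hint hnonneg]

lemma lintegral_Ioi_inv_pow_three_le_of_invMomentBound (e : Measure ℝ) [IsFiniteMeasure e]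
    {α C μ : ℝ} (hC : 0 ≤ C) (h : InvMomentBound e α C) (hμ : 0 < μ) (hμ1 : μ ≤ 1) :
    ∫⁻ l in Ioi μ, ENNReal.ofReal (l ^ 3)⁻¹ ∂e ≤
      ENNReal.ofReal (C + 2 * C * (∫ t in μ..1, t ^ (α - 4)) + (e univ).toReal) := by
  have hJ : 0 ≤ ∫ t in μ..1, t ^ (α - 4) :=
    intervalIntegral.integral_nonneg hμ1 fun t ht => Real.rpow_nonneg (hμ.le.trans ht.1) _
  rw [← Ioc_union_Ioi_eq_Ioi hμ1, lintegral_union measurableSet_Ioi Ioc_disjoint_Ioi_same,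
    ofReal_add (by positivity) ENNReal.toReal_nonneg, ofReal_toReal (measure_ne_top _ _)]
  gcongr
  · exact lintegral_Ioc_inv_pow_three_le_of_invMomentBound e hC h hμ hμ1
  · calc ∫⁻ l in Ioi 1, ENNReal.ofReal (l ^ 3)⁻¹ ∂e ≤ ∫⁻ _ in Ioi (1 : ℝ), 1 ∂e :=
          setLIntegral_mono' measurableSet_Ioi fun l hl =>
            ofReal_le_one.2 (inv_le_one_of_one_le₀ (one_le_pow₀ (le_of_lt hl)))
      _ ≤ e univ := by
          rw [setLIntegral_one]
          exact measure_mono (subset_univ _)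

lemma ae_mem_Ioi_of_measure_Iic_eq_zero {e : Measure ℝ} (he : e (Iic 0) = 0) :
    ∀ᵐ l ∂e, l ∈ Ioi (0 : ℝ) :=
  mem_ae_iff.2 (by rwa [← compl_Ioi] at he)

lemma lintegral_eq_setLIntegral_Ioc_add_Ioi {e : Measure ℝ} (he : e (Iic 0) = 0)
    (f : ℝ → ℝ≥0∞) {b : ℝ} (hb : 0 ≤ b) :
    ∫⁻ l, f l ∂e = ∫⁻ l in Ioc 0 b, f l ∂e + ∫⁻ l in Ioi b, f l ∂e := by
  rw [← lintegral_union measurableSet_Ioi Ioc_disjoint_Ioi_same, Ioc_union_Ioi_eq_Ioi hb,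
    Measure.restrict_eq_self_of_ae_mem (ae_mem_Ioi_of_measure_Iic_eq_zero he)]

lemma setLIntegral_Ioc_le_of_invMomentBound {e : Measure ℝ} {α C b μ : ℝ}
    (h : InvMomentBound e α C) (hb : 0 < b) (hμ : 0 ≤ μ) :
    ∫⁻ l in Ioc 0 b, ENNReal.ofReal (μ ^ 2 / (l * (l + μ) ^ 2)) ∂e ≤
      ENNReal.ofReal (C * b ^ (α - 1)) :=
  (setLIntegral_mono' measurableSet_Ioc fun l hl => by
    rw [← ofReal_inv_of_pos hl.1]
    exact ofReal_le_ofReal (sq_div_mul_add_sq_le_inv hl.1 hμ)).trans (h b hb)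

noncomputable def I2 (e : Measure ℝ) (μ : ℝ) : ℝ := ∫ l, μ ^ 2 / (l * (l + μ) ^ 2) ∂e

lemma I2_eq_toReal_lintegral {e : Measure ℝ} (he : e (Iic 0) = 0) {μ : ℝ} :
    I2 e μ = (∫⁻ l, ENNReal.ofReal (μ ^ 2 / (l * (l + μ) ^ 2)) ∂e).toReal := by
  refine integral_eq_lintegral_of_nonneg_ae ?_ (by fun_prop : Measurable _).aestronglyMeasurable
  filter_upwards [ae_mem_Ioi_of_measure_Iic_eq_zero he] with l (hl : 0 < l)
  positivity

lemma I2_nonneg {e : Measure ℝ} (he : e (Iic 0) = 0) (μ : ℝ) : 0 ≤ I2 e μ := by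
  rw [I2_eq_toReal_lintegral he]
  exact toReal_nonneg

lemma I2_le_of_invMomentBound {e : Measure ℝ} [IsFiniteMeasure e] (he : e (Iic 0) = 0)
    {α C μ : ℝ} (hC : 0 ≤ C) (h : InvMomentBound e α C) (hμ : 0 ≤ μ) :
    I2 e μ ≤ C + (e univ).toReal := by
  rw [I2_eq_toReal_lintegral he]
  refine toReal_le_of_le_ofReal (by positivity) ?_
  rw [lintegral_eq_setLIntegral_Ioc_add_Ioi he _ zero_le_one, ofReal_add hC toReal_nonneg,
    ofReal_toReal (measure_ne_top _ _)]
  gcongr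
  · simpa using setLIntegral_Ioc_le_of_invMomentBound h one_pos hμ
  · calc ∫⁻ l in Ioi 1, ENNReal.ofReal (μ ^ 2 / (l * (l + μ) ^ 2)) ∂e
        ≤ ∫⁻ _ in Ioi (1 : ℝ), 1 ∂e :=
          setLIntegral_mono' measurableSet_Ioi fun l (hl : 1 < l) => ofReal_le_one.2
            ((sq_div_mul_add_sq_le_inv (one_pos.trans hl) hμ).trans (inv_le_one_of_one_le₀ hl.le))
      _ ≤ e univ := by
          rw [setLIntegral_one]
          exact measure_mono (subset_univ _)

lemma I2_le_of_invMomentBound_of_le_one {e : Measure ℝ} [IsFiniteMeasure e] (he : e (Iic 0) = 0)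
    {α C μ : ℝ} (hC : 0 ≤ C) (h : InvMomentBound e α C) (hμ : 0 < μ) (hμ1 : μ ≤ 1) :
    I2 e μ ≤ C * μ ^ (α - 1) +
      μ ^ 2 * (C + 2 * C * (∫ t in μ..1, t ^ (α - 4)) + (e univ).toReal) := by
  have hJ : 0 ≤ ∫ t in μ..1, t ^ (α - 4) :=
    intervalIntegral.integral_nonneg hμ1 fun t ht => Real.rpow_nonneg (hμ.le.trans ht.1) _
  rw [I2_eq_toReal_lintegral he]
  refine toReal_le_of_le_ofReal (by positivity) ?_
  rw [lintegral_eq_setLIntegral_Ioc_add_Ioi he _ hμ.le, ofReal_add (by positivity) (by positivity),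
    ofReal_mul (sq_nonneg μ)]
  gcongr
  · exact setLIntegral_Ioc_le_of_invMomentBound h hμ hμ.le
  · calc ∫⁻ l in Ioi μ, ENNReal.ofReal (μ ^ 2 / (l * (l + μ) ^ 2)) ∂e
        ≤ ∫⁻ l in Ioi μ, ENNReal.ofReal (μ ^ 2) * ENNReal.ofReal (l ^ 3)⁻¹ ∂e :=
          setLIntegral_mono' measurableSet_Ioi fun l (hl : μ < l) => by
            rw [← ofReal_mul (sq_nonneg μ)]
            exact ofReal_le_ofReal (sq_div_mul_add_sq_le_mul_inv_pow_three (hμ.trans hl) hμ.le)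
      _ = ENNReal.ofReal (μ ^ 2) * ∫⁻ l in Ioi μ, ENNReal.ofReal (l ^ 3)⁻¹ ∂e :=
          lintegral_const_mul _ (by fun_prop)
      _ ≤ _ := by
          gcongr
          exact lintegral_Ioi_inv_pow_three_le_of_invMomentBound e hC h hμ hμ1

theorem exists_I2_le_mul_of_invMomentBound {e : Measure ℝ} [IsFiniteMeasure e] (he : e (Iic 0) = 0)
    {α C : ℝ} (hC : 0 < C) (h : InvMomentBound e α C) {φ : ℝ → ℝ} {D : ℝ} (hD : 0 ≤ D)
    (hφ_one : ∀ μ, 1 ≤ μ → 1 ≤ φ μ)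
    (hφ : ∀ μ, 0 < μ → μ ≤ 1 → μ ^ (α - 1) ≤ φ μ ∧ μ ^ 2 ≤ φ μ ∧
      μ ^ 2 * ∫ t in μ..1, t ^ (α - 4) ≤ D * φ μ) :
    ∃ C' > 0, ∀ μ > 0, I2 e μ ≤ C' * φ μ := by
  set E := (e univ).toReal
  have hE : 0 ≤ E := toReal_nonneg
  refine ⟨2 * C + E + 2 * C * D, by positivity, fun μ hμ => ?_⟩
  rcases le_or_gt μ 1 with hμ1 | hμ1
  · obtain ⟨hφ₁, hφ₂, hφ₃⟩ := hφ μ hμ hμ1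
    calc I2 e μ ≤ C * μ ^ (α - 1) + μ ^ 2 * (C + 2 * C * (∫ t in μ..1, t ^ (α - 4)) + E) :=
          I2_le_of_invMomentBound_of_le_one he hC.le h hμ hμ1
      _ ≤ (2 * C + E + 2 * C * D) * φ μ := by
          nlinarith [mul_le_mul_of_nonneg_left hφ₁ hC.le, mul_le_mul_of_nonneg_left hφ₂ hC.le,
            mul_le_mul_of_nonneg_left hφ₂ hE, mul_le_mul_of_nonneg_left hφ₃ hC.le]
  · calc I2 e μ ≤ C + E := I2_le_of_invMomentBound he hC.le h hμ.le
      _ ≤ (2 * C + E + 2 * C * D) * 1 := by nlinarith [mul_nonneg hC.le hD]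
      _ ≤ (2 * C + E + 2 * C * D) * φ μ := by gcongr; exact hφ_one μ hμ1.le

lemma integral_rpow_sub_four {α μ : ℝ} (hα : α ≠ 3) (hμ : 0 < μ) :
    ∫ t in μ..1, t ^ (α - 4) = (1 - μ ^ (α - 3)) / (α - 3) := by
  rw [integral_rpow (Or.inr ⟨by contrapose! hα; linarith, notMem_uIcc_of_lt hμ one_pos⟩),
    show α - 4 + 1 = α - 3 by ring, Real.one_rpow]

theorem exists_I2_le_rpow_of_lt_three {e : Measure ℝ} [IsFiniteMeasure e] (he : e (Iic 0) = 0)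
    {α C : ℝ} (hα : 1 < α) (hα3 : α < 3) (hC : 0 < C) (h : InvMomentBound e α C) :
    ∃ C' > 0, ∀ μ > 0, I2 e μ ≤ C' * μ ^ (α - 1) := by
  refine exists_I2_le_mul_of_invMomentBound he hC h (D := (3 - α)⁻¹)
    (inv_nonneg.2 (sub_nonneg.2 hα3.le))
    (fun μ hμ => Real.one_le_rpow hμ (by linarith)) fun μ hμ hμ1 => ⟨le_rfl, ?_, ?_⟩
  · rw [← Real.rpow_natCast]
    exact Real.rpow_le_rpow_of_exponent_ge hμ hμ1 (by push_cast; linarith)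
  · have hpow : μ ^ 2 * μ ^ (α - 3) = μ ^ (α - 1) := by
      rw [← Real.rpow_natCast, ← Real.rpow_add hμ]
      push_cast
      ring_nf
    rw [integral_rpow_sub_four hα3.ne hμ, ← hpow, ← neg_div_neg_eq, neg_sub, neg_sub,
      div_eq_inv_mul]
    nlinarith [mul_nonneg (inv_pos.2 (sub_pos.2 hα3)).le (sq_nonneg μ)]

theorem exists_I2_le_sq_mul_log_of_eq_three {e : Measure ℝ} [IsFiniteMeasure e]
    (he : e (Iic 0) = 0) {C : ℝ} (hC : 0 < C) (h : InvMomentBound e 3 C) :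
    ∃ C' > 0, ∀ μ > 0, I2 e μ ≤ C' * (μ ^ 2 * max 1 (Real.log (1 / μ))) := by
  refine exists_I2_le_mul_of_invMomentBound he hC h zero_le_one
    (fun μ hμ => one_le_mul_of_one_le_of_one_le (one_le_pow₀ hμ) (le_max_left _ _))
    fun μ hμ hμ1 => ?_
  have hsq : μ ^ 2 ≤ μ ^ 2 * max 1 (Real.log (1 / μ)) :=
    le_mul_of_one_le_right (sq_nonneg μ) (le_max_left _ _)
  refine ⟨by rwa [show (3 : ℝ) - 1 = (2 : ℕ) by norm_num, Real.rpow_natCast], hsq, ?_⟩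
  rw [show (3 : ℝ) - 4 = -1 by norm_num]
  simp only [Real.rpow_neg_one]
  rw [integral_inv_of_pos hμ one_pos, one_mul]
  exact mul_le_mul_of_nonneg_left (le_max_right _ _) (sq_nonneg μ)

theorem exists_I2_le_sq_of_three_lt {e : Measure ℝ} [IsFiniteMeasure e] (he : e (Iic 0) = 0)
    {α C : ℝ} (hα3 : 3 < α) (hC : 0 < C) (h : InvMomentBound e α C) :
    ∃ C' > 0, ∀ μ > 0, I2 e μ ≤ C' * μ ^ 2 := by
  refine exists_I2_le_mul_of_invMomentBound he hC h (D := (α - 3)⁻¹)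
    (inv_nonneg.2 (sub_nonneg.2 hα3.le))
    (fun μ hμ => one_le_pow₀ hμ) fun μ hμ hμ1 => ⟨?_, le_rfl, ?_⟩
  · rw [← Real.rpow_natCast]
    exact Real.rpow_le_rpow_of_exponent_ge hμ hμ1 (by push_cast; linarith)
  · rw [integral_rpow_sub_four hα3.ne' hμ, div_eq_inv_mul]
    nlinarith [mul_nonneg (mul_nonneg (inv_pos.2 (sub_pos.2 hα3)).le (sq_nonneg μ))
      (Real.rpow_nonneg hμ.le (α - 3))]

/-- Upper bounds on `I₂(μ) = ∫ μ²/(λ(λ+μ)²) de(λ)` for a finite Borel measure `e` on `(0, ∞)`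
satisfying `∫_{(0,δ]} λ⁻¹ de(λ) ≤ C δ^{α-1}`: `I₂(μ) ≲ μ^{α-1}` if `α < 3`,
`I₂(μ) ≲ μ² ln_+(1/μ)` if `α = 3`, `I₂(μ) ≲ μ²` if `α > 3`. -/
theorem I2_upper_bounds
    (e : Measure ℝ) [IsFiniteMeasure e] (he : e (Set.Iic 0) = 0)
    (α : ℝ) (hα : 1 < α) (C : ℝ) (hC : 0 < C)
    (h : ∀ δ : ℝ, 0 < δ →
      ∫⁻ l in Set.Ioc (0 : ℝ) δ, (ENNReal.ofReal l)⁻¹ ∂e ≤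
        ENNReal.ofReal (C * δ ^ (α - 1))) :
    ∃ C' : ℝ, 0 < C' ∧ ∀ μ : ℝ, 0 < μ →
      (0 ≤ ∫ l, μ ^ 2 / (l * (l + μ) ^ 2) ∂e) ∧
      (α < 3 → ∫ l, μ ^ 2 / (l * (l + μ) ^ 2) ∂e ≤ C' * μ ^ (α - 1)) ∧
      (α = 3 → ∫ l, μ ^ 2 / (l * (l + μ) ^ 2) ∂e ≤ C' * μ ^ 2 * max 1 (Real.log (1 / μ))) ∧
      (3 < α → ∫ l, μ ^ 2 / (l * (l + μ) ^ 2) ∂e ≤ C' * μ ^ 2) := by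
  rcases lt_trichotomy α 3 with hα3 | rfl | hα3
  · obtain ⟨C', hC', hI⟩ := exists_I2_le_rpow_of_lt_three he hα hα3 hC h
    exact ⟨C', hC', fun μ hμ => ⟨I2_nonneg he μ, fun _ => hI μ hμ,
      fun h3 => absurd h3 hα3.ne, fun h3 => absurd h3 hα3.not_gt⟩⟩
  · obtain ⟨C', hC', hI⟩ := exists_I2_le_sq_mul_log_of_eq_three he hC h
    exact ⟨C', hC', fun μ hμ => ⟨I2_nonneg he μ, fun h3 => absurd h3 (lt_irrefl 3),
      fun _ => (hI μ hμ).trans_eq (mul_assoc _ _ _).symm, fun h3 => absurd h3 (lt_irrefl 3)⟩⟩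
  · obtain ⟨C', hC', hI⟩ := exists_I2_le_sq_of_three_lt he hα3 hC h
    exact ⟨C', hC', fun μ hμ => ⟨I2_nonneg he μ, fun h3 => absurd h3 hα3.not_gt,
      fun h3 => absurd h3 hα3.ne', fun _ => hI μ hμ⟩⟩
end

section
/- Let e be a nonzero finite Borel measure on (0, ∞) with ∫ λ^{−1} de(λ) < ∞, let α > 2, and suppose there exists C > 0 such that for all δ > 0, ∫_{(0,δ]} λ^{−1} de(λ) ≤ C δ^{α − 1}. Let k ∈ ℝ with k ≠ 2, and define I_k(μ) = ∫ (μ² + (2 − k) λ μ) / (λ (λ + μ)²) de(λ). Then there exist constants C₁, C₂ > 0 and μ₀ > 0 such that for all 0 < μ ≤ μ₀: C₁ μ ≤ |I_k(μ)| ≤ C₂ μ. -/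
open MeasureTheory ENNReal
open scoped ENNReal


lemma pow_calc (α : ℝ) (n : ℕ) :
    (2:ℝ)^(n+1) * ((((2:ℝ)^n)⁻¹) ^ (α-1)) = 2 * ((2:ℝ)^((2:ℝ)-α))^n := by
  have h2 : (0:ℝ) < 2 := two_pos
  rw [← Real.rpow_natCast (2:ℝ) n, ← Real.rpow_natCast (2:ℝ) (n+1),
    ← Real.rpow_natCast ((2:ℝ)^((2:ℝ)-α)) n,
    ← Real.rpow_neg h2.le, ← Real.rpow_mul h2.le, ← Real.rpow_mul h2.le,
    ← Real.rpow_add h2]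
  nth_rewrite 2 [show (2:ℝ) = (2:ℝ)^(1:ℝ) by rw [Real.rpow_one]]
  rw [← Real.rpow_add h2]
  push_cast
  ring_nf

lemma invsq_finite (e : Measure ℝ) [IsFiniteMeasure e] (he : e (Set.Iic 0) = 0)
    (α : ℝ) (hα : 2 < α) (C : ℝ) (hC : 0 < C)
    (h : ∀ δ : ℝ, 0 < δ →
      ∫⁻ l in Set.Ioc (0 : ℝ) δ, (ENNReal.ofReal l)⁻¹ ∂e ≤
        ENNReal.ofReal (C * δ ^ (α - 1))) :
    Integrable (fun l : ℝ => (l ^ 2)⁻¹) e := by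
  have hmeas : Measurable fun l : ℝ => (l ^ 2)⁻¹ := (measurable_id.pow_const 2).inv
  refine ⟨hmeas.aestronglyMeasurable, ?_⟩
  rw [hasFiniteIntegral_iff_ofReal (Filter.Eventually.of_forall fun x => by positivity)]
  set f : ℝ → ℝ≥0∞ := fun l => ENNReal.ofReal ((l ^ 2)⁻¹) with hf
  set S : ℕ → Set ℝ := fun n => Set.Ioc (((2:ℝ)^(n+1))⁻¹) (((2:ℝ)^n)⁻¹) with hS
  have hSm : ∀ n, MeasurableSet (S n) := fun n => measurableSet_Ioc
  have hU : Set.Ioc (0:ℝ) 1 = ⋃ n, S n := by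
    ext x
    simp only [Set.mem_Ioc, Set.mem_iUnion, hS]
    constructor
    · rintro ⟨hx0, hx1⟩
      have hex : ∃ n : ℕ, ((2:ℝ)^(n+1))⁻¹ < x := by
        obtain ⟨n, hn⟩ := pow_unbounded_of_one_lt x⁻¹ (one_lt_two (α := ℝ))
        refine ⟨n, ?_⟩
        have : x⁻¹ < 2^(n+1) := hn.trans_le (pow_le_pow_right₀ one_le_two (Nat.le_succ n))
        have h2 : (0:ℝ) < 2^(n+1) := by positivity
        exact (inv_lt_comm₀ h2 hx0).2 this
      refine ⟨Nat.find hex, Nat.find_spec hex, ?_⟩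
      rcases Nat.eq_zero_or_pos (Nat.find hex) with h0 | hpos
      · rw [h0]; simpa using hx1
      · obtain ⟨m, hm⟩ := Nat.exists_eq_succ_of_ne_zero hpos.ne'
        rw [hm]
        have := Nat.find_min hex (m := m) (by omega)
        push_neg at this
        simpa using this
    · rintro ⟨n, hn1, hn2⟩
      have h1 : (0:ℝ) < ((2:ℝ)^(n+1))⁻¹ := by positivity
      refine ⟨h1.trans hn1, hn2.trans ?_⟩
      rw [inv_le_one_iff₀]
      right; exact one_le_pow₀ one_le_two
  have hdisj : Pairwise (Function.onFun Disjoint S) := by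
    have key : ∀ m n : ℕ, m < n → Disjoint (S m) (S n) := by
      intro m n hmn
      rw [Set.disjoint_left]
      rintro x ⟨hx1, _⟩ ⟨_, hy2⟩
      have hle : ((2:ℝ)^n)⁻¹ ≤ ((2:ℝ)^(m+1))⁻¹ :=
        inv_anti₀ (by positivity) (pow_le_pow_right₀ one_le_two hmn)
      exact absurd (hy2.trans hle) (not_le.2 hx1)
    intro m n hmn
    rcases hmn.lt_or_gt with h' | h'
    · exact key m n h'
    · exact (key n m h').symm
  have main : ∫⁻ l in Set.Ioc (0:ℝ) 1, f l ∂e < ⊤ := by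
    rw [hU, lintegral_iUnion hSm hdisj]
    set r : ℝ≥0∞ := ENNReal.ofReal ((2:ℝ)^((2:ℝ)-α)) with hr
    have hr1 : r < 1 := by
      rw [hr, ENNReal.ofReal_lt_one]
      exact Real.rpow_lt_one_of_one_lt_of_neg one_lt_two (by linarith)
    have hbound : ∀ n : ℕ, ∫⁻ l in S n, f l ∂e ≤ ENNReal.ofReal (2*C) * r^n := by
      intro n
      have hpos : (0:ℝ) < ((2:ℝ)^(n+1))⁻¹ := by positivity
      calc ∫⁻ l in S n, f l ∂e
          ≤ ∫⁻ l in S n, ENNReal.ofReal ((2:ℝ)^(n+1)) * (ENNReal.ofReal l)⁻¹ ∂e := by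
            apply setLIntegral_mono (by fun_prop)
            intro x hx
            have hx0 : 0 < x := hpos.trans hx.1
            have hxi : x⁻¹ ≤ (2:ℝ)^(n+1) := by
              rw [inv_le_comm₀ hx0 (by positivity)]
              exact hx.1.le
            rw [hf, ← ENNReal.ofReal_inv_of_pos hx0, ← ENNReal.ofReal_mul (by positivity)]
            apply ENNReal.ofReal_le_ofReal
            rw [sq, mul_inv]
            exact mul_le_mul_of_nonneg_right hxi (by positivity)
        _ = ENNReal.ofReal ((2:ℝ)^(n+1)) * ∫⁻ l in S n, (ENNReal.ofReal l)⁻¹ ∂e := by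
            rw [lintegral_const_mul _ (by fun_prop)]
        _ ≤ ENNReal.ofReal ((2:ℝ)^(n+1)) * ENNReal.ofReal (C * (((2:ℝ)^n)⁻¹) ^ (α-1)) := by
            gcongr
            refine le_trans (lintegral_mono_set ?_) (h _ (by positivity))
            intro x hx
            exact ⟨hpos.trans hx.1, hx.2⟩
        _ = ENNReal.ofReal (2*C) * r^n := by
            rw [← ENNReal.ofReal_mul (by positivity), hr, ← ENNReal.ofReal_pow (by positivity),
              ← ENNReal.ofReal_mul (by positivity)]
            congr 1
            calc (2:ℝ)^(n+1) * (C * (((2:ℝ)^n)⁻¹) ^ (α-1))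
                = C * ((2:ℝ)^(n+1) * ((((2:ℝ)^n)⁻¹) ^ (α-1))) := by ring
              _ = 2*C * ((2:ℝ)^((2:ℝ)-α))^n := by rw [pow_calc]; ring
    calc ∑' n, ∫⁻ l in S n, f l ∂e ≤ ∑' n, ENNReal.ofReal (2*C) * r^n :=
          ENNReal.tsum_le_tsum hbound
      _ = ENNReal.ofReal (2*C) * (1-r)⁻¹ := by rw [ENNReal.tsum_mul_left, ENNReal.tsum_geometric]
      _ < ⊤ := by
          apply ENNReal.mul_lt_top ENNReal.ofReal_lt_top
          exact ENNReal.inv_lt_top.2 (tsub_pos_of_lt hr1)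
  have rest : ∫⁻ l in (Set.Ioc (0:ℝ) 1)ᶜ, f l ∂e < ⊤ := by
    have hsub : (Set.Ioc (0:ℝ) 1)ᶜ ⊆ Set.Iic 0 ∪ Set.Ioi 1 := by
      intro x hx
      simp only [Set.mem_compl_iff, Set.mem_Ioc, not_and_or, not_lt, not_le] at hx
      rcases hx with h' | h'
      · exact Or.inl h'
      · exact Or.inr h'
    calc ∫⁻ l in (Set.Ioc (0:ℝ) 1)ᶜ, f l ∂e
        ≤ ∫⁻ l in Set.Iic 0 ∪ Set.Ioi 1, f l ∂e := lintegral_mono_set hsub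
      _ ≤ ∫⁻ l in Set.Iic 0, f l ∂e + ∫⁻ l in Set.Ioi 1, f l ∂e := lintegral_union_le _ _ _
      _ ≤ 0 + ∫⁻ l in Set.Ioi 1, 1 ∂e := by
          refine add_le_add (le_of_eq (setLIntegral_measure_zero _ _ he)) ?_
          apply setLIntegral_mono measurable_const
          · intro x hx
            simp only [Set.mem_Ioi] at hx
            refine ENNReal.ofReal_le_one.2 ?_
            rw [inv_le_one_iff₀]; right; nlinarith
      _ = e (Set.Ioi 1) := by simp
      _ < ⊤ := measure_lt_top e _
  rw [← lintegral_add_compl f (measurableSet_Ioc (a := (0:ℝ)) (b := 1))]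
  exact ENNReal.add_lt_top.2 ⟨main, rest⟩


theorem main_part
    (e : Measure ℝ) [IsFiniteMeasure e] (he : e (Set.Iic 0) = 0) (hne : e ≠ 0)
    (hint : Integrable (fun l : ℝ => (l^2)⁻¹) e)
    (k : ℝ) (hk : k ≠ 2) :
    ∃ C₁ : ℝ, 0 < C₁ ∧ ∃ C₂ : ℝ, 0 < C₂ ∧ ∃ μ₀ : ℝ, 0 < μ₀ ∧
      ∀ μ : ℝ, 0 < μ → μ ≤ μ₀ →
        C₁ * μ ≤ |∫ l, (μ ^ 2 + (2 - k) * l * μ) / (l * (l + μ) ^ 2) ∂e| ∧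
        |∫ l, (μ ^ 2 + (2 - k) * l * μ) / (l * (l + μ) ^ 2) ∂e| ≤ C₂ * μ := by
  have hae : ∀ᵐ l ∂e, 0 < l := by
    rw [ae_iff]
    have hs : {l : ℝ | ¬ 0 < l} = Set.Iic 0 := by ext x; simp
    rw [hs]; exact he
  set D : ℝ := |2 - k| + 1/4 with hD
  have hDpos : 0 < D := by positivity
  have hbnd : Integrable (fun l : ℝ => D * (l^2)⁻¹) e := hint.const_mul D
  set g : ℝ → ℝ → ℝ := fun μ l => (μ + (2-k)*l) / (l * (l+μ)^2) with hg
  have hJpos : 0 < ∫ l, (l^2)⁻¹ ∂e := by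
    rw [integral_pos_iff_support_of_nonneg_ae
      (Filter.Eventually.of_forall fun x => by positivity) hint]
    have hsub : Set.Ioi (0:ℝ) ⊆ Function.support fun l : ℝ => (l^2)⁻¹ := by
      intro x hx
      simp only [Function.mem_support]
      have : (0:ℝ) < x := hx
      positivity
    calc (0:ℝ≥0∞) < e Set.univ := Measure.measure_univ_pos.2 hne
      _ = e (Set.Ioi 0) := by
          rw [← Set.compl_Iic, measure_compl measurableSet_Iic (measure_ne_top e _), he,
            tsub_zero]
      _ ≤ e (Function.support fun l : ℝ => (l^2)⁻¹) := measure_mono hsub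
  set L : ℝ := (2-k) * ∫ l, (l^2)⁻¹ ∂e with hL
  have hLne : L ≠ 0 := mul_ne_zero (sub_ne_zero.2 (Ne.symm hk)) hJpos.ne'
  have habs : 0 < |L| := abs_pos.2 hLne
  have hLint : L = ∫ l, (2-k) * (l^2)⁻¹ ∂e := (integral_const_mul _ _).symm
  have htend : Filter.Tendsto (fun μ => ∫ l, g μ l ∂e)
      (nhdsWithin 0 (Set.Ioi 0)) (nhds L) := by
    rw [hLint]
    apply tendsto_integral_filter_of_dominated_convergence (bound := fun l => D * (l^2)⁻¹)
    · exact Filter.Eventually.of_forall fun μ =>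
        (Measurable.div (by fun_prop) (by fun_prop)).aestronglyMeasurable
    · filter_upwards [self_mem_nhdsWithin] with μ hμ
      filter_upwards [hae] with l hl
      have hμ0 : (0:ℝ) < μ := hμ
      have hden : 0 < l * (l+μ)^2 := by positivity
      rw [hg]
      simp only []
      rw [Real.norm_eq_abs, abs_div, abs_of_pos hden, div_le_iff₀ hden]
      have h1 : |μ + (2-k)*l| ≤ μ + |2-k| * l := by
        calc |μ + (2-k)*l| ≤ |μ| + |(2-k)*l| := abs_add_le _ _
          _ = μ + |2-k| * l := by rw [abs_of_pos hμ0, abs_mul, abs_of_pos hl]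
      calc |μ + (2-k)*l| ≤ μ + |2-k| * l := h1
        _ ≤ D * (l^2)⁻¹ * (l * (l+μ)^2) := by
            rw [hD]
            have hl2 : (0:ℝ) < l^2 := by positivity
            rw [mul_comm (( |2-k| + 1/4)) ((l^2)⁻¹), mul_assoc, ← div_eq_inv_mul,
              le_div_iff₀ hl2]
            have hsq : 4 * l * μ ≤ (l + μ)^2 := by nlinarith [sq_nonneg (l - μ)]
            have habs2 : (0:ℝ) ≤ |2-k| := abs_nonneg _
            have h2 : l * (4*l*μ) ≤ l * (l+μ)^2 := mul_le_mul_of_nonneg_left hsq hl.le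
            have h4 : |2-k| * (l*l^2) ≤ |2-k| * (l*(l+μ)^2) :=
              mul_le_mul_of_nonneg_left
                (by nlinarith [mul_pos (mul_pos hl hl) hμ0, mul_pos hl (mul_pos hμ0 hμ0)]) habs2
            nlinarith [h2, h4]
    · exact hbnd
    · filter_upwards [hae] with l hl
      have hne0 : l * (l + 0)^2 ≠ 0 := by
        simp only [add_zero]
        positivity
      have hcont : ContinuousAt (fun μ : ℝ => (μ + (2-k)*l)/(l*(l+μ)^2)) 0 :=
        ContinuousAt.div (by fun_prop) (by fun_prop) hne0
      have h0 : (0 + (2-k)*l)/(l*(l+0)^2) = (2-k) * (l^2)⁻¹ := by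
        rw [zero_add, add_zero]
        field_simp
      have htt : Filter.Tendsto (fun μ : ℝ => (μ + (2-k)*l)/(l*(l+μ)^2))
          (nhdsWithin 0 (Set.Ioi 0)) (nhds ((0 + (2-k)*l)/(l*(l+0)^2))) :=
        hcont.tendsto.mono_left nhdsWithin_le_nhds
      rw [h0] at htt
      exact htt
  have hev : ∀ᶠ μ in nhdsWithin 0 (Set.Ioi 0), |(∫ l, g μ l ∂e) - L| < |L|/2 := by
    have := htend (Metric.ball_mem_nhds L (by positivity : (0:ℝ) < |L|/2))
    filter_upwards [this] with μ hμ
    simp only [Set.mem_preimage, Metric.mem_ball, Real.dist_eq] at hμ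
    exact hμ
  obtain ⟨ε, hε, hball⟩ := (nhdsGT_basis (0:ℝ)).eventually_iff.1 hev
  refine ⟨|L|/2, by positivity, 2*|L|, by positivity, ε/2, by positivity, ?_⟩
  intro μ hμ0 hμε
  have hgo : |(∫ l, g μ l ∂e) - L| < |L|/2 := hball ⟨hμ0, by linarith⟩
  have hIk : ∫ l, (μ^2 + (2-k)*l*μ)/(l*(l+μ)^2) ∂e = μ * ∫ l, g μ l ∂e := by
    rw [← integral_const_mul]
    congr 1
    ext l
    rw [hg, ← mul_div_assoc]
    congr 1
    ring
  have hlow : |L|/2 ≤ |∫ l, g μ l ∂e| := by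
    have := abs_sub_abs_le_abs_sub L (∫ l, g μ l ∂e)
    rw [abs_sub_comm] at this
    linarith
  have hhigh : |∫ l, g μ l ∂e| ≤ 2*|L| := by
    have := abs_sub_abs_le_abs_sub (∫ l, g μ l ∂e) L
    linarith
  have hm : |μ * ∫ l, g μ l ∂e| = μ * |∫ l, g μ l ∂e| := by
    rw [abs_mul μ, abs_of_pos hμ0]
  have e1 : |L|/2 * μ ≤ |μ * ∫ l, g μ l ∂e| := by
    calc |L|/2 * μ = μ * (|L|/2) := by ring
      _ ≤ μ * |∫ l, g μ l ∂e| := mul_le_mul_of_nonneg_left hlow hμ0.le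
      _ = |μ * ∫ l, g μ l ∂e| := hm.symm
  have e2 : |μ * ∫ l, g μ l ∂e| ≤ 2*|L| * μ := by
    calc |μ * ∫ l, g μ l ∂e| = μ * |∫ l, g μ l ∂e| := hm
      _ ≤ μ * (2*|L|) := mul_le_mul_of_nonneg_left hhigh hμ0.le
      _ = 2*|L| * μ := by ring
  rw [hIk]
  exact ⟨e1, e2⟩


/-- For a nonzero finite Borel measure `e` on `(0, ∞)` with `∫ λ⁻¹ de(λ) < ∞` satisfying
`∫_{(0,δ]} λ⁻¹ de(λ) ≤ C δ^{α-1}` for some `α > 2`, and any `k ≠ 2`, the error term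
`I_k(μ) = ∫ (μ² + (2-k)λμ)/(λ(λ+μ)²) de(λ)` satisfies `C₁ μ ≤ |I_k(μ)| ≤ C₂ μ` for all
small enough `μ > 0`. -/
theorem Ik_asymptotics
    (e : Measure ℝ) [IsFiniteMeasure e] (he : e (Set.Iic 0) = 0) (hne : e ≠ 0)
    (hfin : ∫⁻ l, (ENNReal.ofReal l)⁻¹ ∂e < ⊤)
    (α : ℝ) (hα : 2 < α) (C : ℝ) (hC : 0 < C)
    (h : ∀ δ : ℝ, 0 < δ →
      ∫⁻ l in Set.Ioc (0 : ℝ) δ, (ENNReal.ofReal l)⁻¹ ∂e ≤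
        ENNReal.ofReal (C * δ ^ (α - 1)))
    (k : ℝ) (hk : k ≠ 2) :
    ∃ C₁ : ℝ, 0 < C₁ ∧ ∃ C₂ : ℝ, 0 < C₂ ∧ ∃ μ₀ : ℝ, 0 < μ₀ ∧
      ∀ μ : ℝ, 0 < μ → μ ≤ μ₀ →
        C₁ * μ ≤ |∫ l, (μ ^ 2 + (2 - k) * l * μ) / (l * (l + μ) ^ 2) ∂e| ∧
        |∫ l, (μ ^ 2 + (2 - k) * l * μ) / (l * (l + μ) ^ 2) ∂e| ≤ C₂ * μ := by
  exact main_part e he hne (invsq_finite e he α hα C hC h) k hk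
end

section
/- Let e be a finite Borel measure on [0, ∞) and let α > 1. Suppose there exists C > 0 such that for all δ > 0, ∫_{[0,δ]} λ^{−1} de(λ) ≤ C δ^{α − 1}. Then there exists C′ > 0 such that for all μ > 0: ∫ (λ + μ)^{−2} de(λ) ≤ C′ μ^{α − 2} if α < 2; ∫ (λ + μ)^{−2} de(λ) ≤ C′ max(1, ln(1/μ)) if α = 2; ∫ (λ + μ)^{−2} de(λ) ≤ C′ if α > 2. -/
/-!
Put `ν = λ⁻¹ e`. Since `(λ + μ)⁻² ≤ λ⁻¹ max(λ, μ)⁻¹`, the layer-cake formula gives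
`∫ (λ + μ)⁻² de ≤ ∫_0^{1/μ} ν[0, 1/t) dt`. The hypothesis bounds the integrand by `C t^{1-α}`,
and near `t = 0` it is also bounded by the total mass `ν(ℝ) ≤ C + e(ℝ)`. Integrating gives
`μ^{α-2}` for `α < 2`, `log (1/μ)` for `α = 2` and a constant for `α > 2`.
-/

open MeasureTheory ENNReal Set
open scoped ENNReal

theorem lintegral_Ioc_zero_rpow {r b : ℝ} (hr : -1 < r) (hb : 0 ≤ b) :
    ∫⁻ t in Ioc 0 b, ENNReal.ofReal (t ^ r) = ENNReal.ofReal (b ^ (r + 1) / (r + 1)) := by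
  have hint : IntegrableOn (fun t : ℝ => t ^ r) (Ioc 0 b) :=
    (intervalIntegrable_iff_integrableOn_Ioc_of_le hb).mp
      (intervalIntegral.intervalIntegrable_rpow' hr)
  rw [← ofReal_integral_eq_lintegral_ofReal hint
    (ae_restrict_of_forall_mem measurableSet_Ioc fun t ht => Real.rpow_nonneg ht.1.le r),
    ← intervalIntegral.integral_of_le hb, integral_rpow (Or.inl hr),
    Real.zero_rpow (by linarith), sub_zero]

theorem lintegral_Ioi_rpow {r c : ℝ} (hr : r < -1) (hc : 0 < c) :
    ∫⁻ t in Ioi c, ENNReal.ofReal (t ^ r) = ENNReal.ofReal (-c ^ (r + 1) / (r + 1)) := by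
  rw [← ofReal_integral_eq_lintegral_ofReal (integrableOn_Ioi_rpow_of_lt hr hc)
    (ae_restrict_of_forall_mem measurableSet_Ioi fun t ht => Real.rpow_nonneg (hc.trans ht).le r),
    integral_Ioi_rpow_of_lt hr hc]

theorem lintegral_Ioc_inv {a b : ℝ} (ha : 0 < a) (hab : a ≤ b) :
    ∫⁻ t in Ioc a b, ENNReal.ofReal t⁻¹ = ENNReal.ofReal (Real.log (b / a)) := by
  have hzero : (0 : ℝ) ∉ uIcc a b := by
    rw [uIcc_of_le hab]
    exact fun h => ha.not_ge h.1
  have hint : IntegrableOn (fun t : ℝ => t⁻¹) (Ioc a b) :=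
    (intervalIntegrable_iff_integrableOn_Ioc_of_le hab).mp
      (intervalIntegral.intervalIntegrable_inv (fun t ht => ne_of_mem_of_not_mem ht hzero)
        continuousOn_id)
  rw [← ofReal_integral_eq_lintegral_ofReal hint
    (ae_restrict_of_forall_mem measurableSet_Ioc fun t ht => inv_nonneg.mpr (ha.trans ht.1).le),
    ← intervalIntegral.integral_of_le hab, integral_inv hzero]

theorem integral_le_of_lintegral_ofReal_le {X : Type*} [MeasurableSpace X] {m : Measure X}
    {f : X → ℝ} {B : ℝ} (hf : 0 ≤ᵐ[m] f) (hfm : AEStronglyMeasurable f m) (hB : 0 ≤ B)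
    (h : ∫⁻ x, ENNReal.ofReal (f x) ∂m ≤ ENNReal.ofReal B) : ∫ x, f x ∂m ≤ B := by
  rw [integral_eq_lintegral_of_nonneg_ae hf hfm]
  exact ENNReal.toReal_le_of_le_ofReal hB h

theorem inv_sq_add_le_inv_mul_inv_max {l μ : ℝ} (hl : 0 < l) (hμ : 0 < μ) :
    ((l + μ) ^ 2)⁻¹ ≤ l⁻¹ * (max l μ)⁻¹ := by
  rw [← mul_inv]
  refine inv_anti₀ (by positivity) ?_
  rcases max_cases l μ with ⟨hmax, -⟩ | ⟨hmax, -⟩ <;> rw [hmax] <;> nlinarith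

theorem ofReal_inv_sq_add_le (l : ℝ) {μ : ℝ} (hμ : 0 < μ) :
    ENNReal.ofReal ((l + μ) ^ 2)⁻¹ ≤ (ENNReal.ofReal l)⁻¹ * ENNReal.ofReal (max l μ)⁻¹ := by
  rcases le_or_gt l 0 with hl | hl
  · have hmax : 0 < (max l μ)⁻¹ := inv_pos.mpr (lt_max_of_lt_right hμ)
    rw [ENNReal.ofReal_of_nonpos hl, ENNReal.inv_zero,
      ENNReal.top_mul (ENNReal.ofReal_pos.mpr hmax).ne']
    exact le_top
  · rw [← ENNReal.ofReal_inv_of_pos hl, ← ENNReal.ofReal_mul (inv_nonneg.mpr hl.le)]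
    exact ENNReal.ofReal_le_ofReal (inv_sq_add_le_inv_mul_inv_max hl hμ)

theorem lintegral_ofReal_inv_sq_add_le (e : Measure ℝ) {μ : ℝ} (hμ : 0 < μ) :
    ∫⁻ l, ENNReal.ofReal ((l + μ) ^ 2)⁻¹ ∂e ≤
      ∫⁻ l, ENNReal.ofReal (max l μ)⁻¹ ∂e.withDensity fun l => (ENNReal.ofReal l)⁻¹ := by
  rw [lintegral_withDensity_eq_lintegral_mul _ (by fun_prop) (by fun_prop)]
  exact lintegral_mono fun l => ofReal_inv_sq_add_le l hμ

theorem lt_inv_max_iff {t a μ : ℝ} (ht : 0 < t) (hμ : 0 < μ) :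
    t < (max a μ)⁻¹ ↔ a < t⁻¹ ∧ t < μ⁻¹ := by
  rw [lt_inv_comm₀ ht (lt_max_of_lt_right hμ), max_lt_iff, lt_inv_comm₀ hμ ht]

theorem lintegral_ofReal_inv_max_eq (ν : Measure ℝ) {μ : ℝ} (hμ : 0 < μ) :
    ∫⁻ l, ENNReal.ofReal (max l μ)⁻¹ ∂ν = ∫⁻ t in Ioo 0 μ⁻¹, ν (Iio t⁻¹) := by
  have hlevel : ∀ t ∈ Ioi (0 : ℝ),
      ν {a | t < (max a μ)⁻¹} = (Iio μ⁻¹).indicator (fun t => ν (Iio t⁻¹)) t := by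
    intro t ht
    simp_rw [lt_inv_max_iff ht hμ]
    by_cases htμ : t < μ⁻¹
    · simp [htμ, Iio]
    · simp [htμ]
  rw [lintegral_eq_lintegral_meas_lt ν
      (ae_of_all _ fun l => inv_nonneg.mpr (le_max_of_le_right hμ.le)) (by fun_prop),
    setLIntegral_congr_fun measurableSet_Ioi hlevel, lintegral_indicator measurableSet_Iio,
    Measure.restrict_restrict measurableSet_Iio, inter_comm, Ioi_inter_Iio]

theorem measure_Iio_inv_le_of_forall_measure_Icc_le {ν : Measure ℝ} {C α : ℝ}
    (hν0 : ν (Iio 0) = 0) (hν : ∀ δ, 0 < δ → ν (Icc 0 δ) ≤ ENNReal.ofReal (C * δ ^ (α - 1)))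
    {t : ℝ} (ht : 0 < t) : ν (Iio t⁻¹) ≤ ENNReal.ofReal C * ENNReal.ofReal (t ^ (1 - α)) :=
  calc ν (Iio t⁻¹) ≤ ν (Iio 0 ∪ Icc 0 t⁻¹) := measure_mono fun a ha => by
          rcases lt_or_ge a 0 with h | h
          exacts [Or.inl h, Or.inr ⟨h, le_of_lt ha⟩]
    _ ≤ ν (Iio 0) + ν (Icc 0 t⁻¹) := measure_union_le _ _
    _ ≤ ENNReal.ofReal (C * t⁻¹ ^ (α - 1)) := by
          rw [hν0, zero_add]
          exact hν _ (inv_pos.mpr ht)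
    _ = _ := by
          rw [ENNReal.ofReal_mul' (Real.rpow_nonneg (inv_nonneg.mpr ht.le) _), Real.inv_rpow ht.le,
            ← Real.rpow_neg ht.le, neg_sub]

theorem withDensity_inv_univ_le (e : Measure ℝ) (he : e (Iio 0) = 0) :
    e.withDensity (fun l => (ENNReal.ofReal l)⁻¹) univ ≤
      e.withDensity (fun l => (ENNReal.ofReal l)⁻¹) (Icc 0 1) + e univ := by
  set ν := e.withDensity fun l => (ENNReal.ofReal l)⁻¹
  have hν0 : ν (Iio 0) = 0 := withDensity_absolutelyContinuous e _ he
  have hν1 : ν (Ioi 1) ≤ e univ := by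
    rw [withDensity_apply _ measurableSet_Ioi]
    calc ∫⁻ l in Ioi 1, (ENNReal.ofReal l)⁻¹ ∂e ≤ ∫⁻ _ in Ioi (1 : ℝ), 1 ∂e :=
          setLIntegral_mono measurable_const fun l hl =>
            ENNReal.inv_le_one.mpr (ENNReal.one_le_ofReal.mpr (le_of_lt hl))
      _ ≤ e univ := by rw [setLIntegral_one]; exact measure_mono (subset_univ _)
  calc ν univ ≤ ν (Iio 0 ∪ Icc 0 1 ∪ Ioi 1) := measure_mono fun a _ => by
        rcases lt_or_ge a 0 with h0 | h0
        · exact Or.inl (Or.inl h0)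
        rcases le_or_gt a 1 with h1 | h1
        exacts [Or.inl (Or.inr ⟨h0, h1⟩), Or.inr h1]
    _ ≤ ν (Iio 0) + ν (Icc 0 1) + ν (Ioi 1) :=
        (measure_union_le _ _).trans (by gcongr; exact measure_union_le _ _)
    _ ≤ ν (Icc 0 1) + e univ := by rw [hν0, zero_add]; gcongr

section DistributionBounds

variable {ν : Measure ℝ} {C α : ℝ}

theorem setLIntegral_measure_Iio_inv_le_of_lt_two
    (hF : ∀ t, 0 < t → ν (Iio t⁻¹) ≤ ENNReal.ofReal C * ENNReal.ofReal (t ^ (1 - α)))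
    (hα : α < 2) {μ : ℝ} (hμ : 0 < μ) :
    ∫⁻ t in Ioo 0 μ⁻¹, ν (Iio t⁻¹) ≤ ENNReal.ofReal (C / (2 - α) * μ ^ (α - 2)) :=
  calc ∫⁻ t in Ioo 0 μ⁻¹, ν (Iio t⁻¹)
      ≤ ∫⁻ t in Ioc 0 μ⁻¹, ENNReal.ofReal C * ENNReal.ofReal (t ^ (1 - α)) :=
        (lintegral_mono_set Ioo_subset_Ioc_self).trans
          (setLIntegral_mono (by fun_prop) fun t ht => hF t ht.1)
    _ = ENNReal.ofReal C * ENNReal.ofReal (μ⁻¹ ^ (2 - α) / (2 - α)) := by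
        rw [lintegral_const_mul' _ _ ofReal_ne_top,
          lintegral_Ioc_zero_rpow (by linarith) (inv_nonneg.mpr hμ.le),
          show 1 - α + 1 = 2 - α by ring]
    _ = ENNReal.ofReal (C / (2 - α) * μ ^ (α - 2)) := by
        rw [← ENNReal.ofReal_mul'
            (div_nonneg (Real.rpow_nonneg (inv_nonneg.mpr hμ.le) _) (by linarith)),
          Real.inv_rpow hμ.le, ← Real.rpow_neg hμ.le, neg_sub]
        ring_nf

theorem setLIntegral_measure_Iio_inv_le_add
    (hF : ∀ t, 0 < t → ν (Iio t⁻¹) ≤ ENNReal.ofReal C * ENNReal.ofReal (t ^ (1 - α))) (b : ℝ) :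
    ∫⁻ t in Ioo 0 b, ν (Iio t⁻¹) ≤
      ν univ + ENNReal.ofReal C * ∫⁻ t in Ioo 1 b, ENNReal.ofReal (t ^ (1 - α)) :=
  calc ∫⁻ t in Ioo 0 b, ν (Iio t⁻¹)
      ≤ ∫⁻ t in Ioc 0 1 ∪ Ioo 1 b, ν (Iio t⁻¹) := lintegral_mono_set fun t ht => by
        rcases le_or_gt t 1 with h1 | h1
        exacts [Or.inl ⟨ht.1, h1⟩, Or.inr ⟨h1, ht.2⟩]
    _ ≤ (∫⁻ _ in Ioc 0 1, ν univ) +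
          ∫⁻ t in Ioo 1 b, ENNReal.ofReal C * ENNReal.ofReal (t ^ (1 - α)) :=
        (lintegral_union_le _ _ _).trans <| add_le_add
          (setLIntegral_mono measurable_const fun t _ => measure_mono (subset_univ _))
          (setLIntegral_mono (by fun_prop) fun t ht => hF t (one_pos.trans ht.1))
    _ = _ := by
        rw [setLIntegral_const, Real.volume_Ioc, sub_zero, ENNReal.ofReal_one, mul_one,
          lintegral_const_mul' _ _ ofReal_ne_top]

theorem setLIntegral_measure_Iio_inv_le_of_eq_two
    (hF : ∀ t, 0 < t → ν (Iio t⁻¹) ≤ ENNReal.ofReal C * ENNReal.ofReal (t ^ (1 - α)))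
    (hC : 0 ≤ C) (hα : α = 2) {M : ℝ} (hM0 : 0 ≤ M) (hM : ν univ ≤ ENNReal.ofReal M) (μ : ℝ) :
    ∫⁻ t in Ioo 0 μ⁻¹, ν (Iio t⁻¹) ≤ ENNReal.ofReal ((M + C) * max 1 (Real.log (1 / μ))) := by
  set L := Real.log (max 1 μ⁻¹)
  have hL0 : 0 ≤ L := Real.log_nonneg (le_max_left _ _)
  have hL : L ≤ max 1 (Real.log (1 / μ)) := by
    rcases max_cases 1 μ⁻¹ with ⟨h, -⟩ | ⟨h, -⟩ <;> simp [L, h]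
  have htail : ∫⁻ t in Ioo 1 μ⁻¹, ENNReal.ofReal (t ^ (1 - α)) ≤ ENNReal.ofReal L :=
    calc ∫⁻ t in Ioo 1 μ⁻¹, ENNReal.ofReal (t ^ (1 - α))
        ≤ ∫⁻ t in Ioc 1 (max 1 μ⁻¹), ENNReal.ofReal t⁻¹ := by
          refine (lintegral_mono_set (show Ioo 1 μ⁻¹ ⊆ Ioc 1 (max 1 μ⁻¹) from
            fun t ht => ⟨ht.1, ht.2.le.trans (le_max_right _ _)⟩)).trans
            (le_of_eq (setLIntegral_congr_fun measurableSet_Ioc fun t _ => ?_))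
          rw [hα, show (1 : ℝ) - 2 = -1 by norm_num, Real.rpow_neg_one]
      _ = ENNReal.ofReal L := by rw [lintegral_Ioc_inv one_pos (le_max_left _ _), div_one]
  calc ∫⁻ t in Ioo 0 μ⁻¹, ν (Iio t⁻¹)
      ≤ ENNReal.ofReal M + ENNReal.ofReal C * ENNReal.ofReal L := by
        grw [setLIntegral_measure_Iio_inv_le_add hF, hM, htail]
    _ = ENNReal.ofReal (M + C * L) := by
        rw [← ENNReal.ofReal_mul hC, ← ENNReal.ofReal_add hM0 (mul_nonneg hC hL0)]
    _ ≤ ENNReal.ofReal ((M + C) * max 1 (Real.log (1 / μ))) := by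
        refine ENNReal.ofReal_le_ofReal ?_
        nlinarith [le_max_left 1 (Real.log (1 / μ))]

theorem setLIntegral_measure_Iio_inv_le_of_two_lt
    (hF : ∀ t, 0 < t → ν (Iio t⁻¹) ≤ ENNReal.ofReal C * ENNReal.ofReal (t ^ (1 - α)))
    (hC : 0 ≤ C) (hα : 2 < α) {M : ℝ} (hM0 : 0 ≤ M) (hM : ν univ ≤ ENNReal.ofReal M) (b : ℝ) :
    ∫⁻ t in Ioo 0 b, ν (Iio t⁻¹) ≤ ENNReal.ofReal (M + C / (α - 2)) := by
  have htail : ∫⁻ t in Ioo 1 b, ENNReal.ofReal (t ^ (1 - α)) ≤ ENNReal.ofReal (1 / (α - 2)) :=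
    calc ∫⁻ t in Ioo 1 b, ENNReal.ofReal (t ^ (1 - α))
        ≤ ∫⁻ t in Ioi 1, ENNReal.ofReal (t ^ (1 - α)) := lintegral_mono_set Ioo_subset_Ioi_self
      _ = ENNReal.ofReal (1 / (α - 2)) := by
        rw [lintegral_Ioi_rpow (by linarith) one_pos, Real.one_rpow,
          show 1 - α + 1 = -(α - 2) by ring, div_neg, neg_div, neg_neg]
  calc ∫⁻ t in Ioo 0 b, ν (Iio t⁻¹)
      ≤ ENNReal.ofReal M + ENNReal.ofReal C * ENNReal.ofReal (1 / (α - 2)) := by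
        grw [setLIntegral_measure_Iio_inv_le_add hF, hM, htail]
    _ = ENNReal.ofReal (M + C / (α - 2)) := by
        rw [← ENNReal.ofReal_mul hC, ← ENNReal.ofReal_add hM0 (by positivity), mul_one_div]

end DistributionBounds

theorem resolvent_second_moment_bounds_general
    (e : Measure ℝ) [IsFiniteMeasure e] (he : e (Set.Iio 0) = 0)
    (α : ℝ) (C : ℝ) (hC : 0 < C)
    (h : ∀ δ : ℝ, 0 < δ →
      ∫⁻ l in Set.Icc (0 : ℝ) δ, (ENNReal.ofReal l)⁻¹ ∂e ≤
        ENNReal.ofReal (C * δ ^ (α - 1))) :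
    ∃ C' : ℝ, 0 < C' ∧ ∀ μ : ℝ, 0 < μ →
      (α < 2 → ∫ l, ((l + μ) ^ 2)⁻¹ ∂e ≤ C' * μ ^ (α - 2)) ∧
      (α = 2 → ∫ l, ((l + μ) ^ 2)⁻¹ ∂e ≤ C' * max 1 (Real.log (1 / μ))) ∧
      (2 < α → ∫ l, ((l + μ) ^ 2)⁻¹ ∂e ≤ C') := by
  set ν := e.withDensity fun l => (ENNReal.ofReal l)⁻¹
  have hνIcc : ∀ δ, 0 < δ → ν (Icc 0 δ) ≤ ENNReal.ofReal (C * δ ^ (α - 1)) := fun δ hδ =>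
    (withDensity_apply _ measurableSet_Icc).trans_le (h δ hδ)
  have hF : ∀ t, 0 < t → ν (Iio t⁻¹) ≤ ENNReal.ofReal C * ENNReal.ofReal (t ^ (1 - α)) :=
    fun t => measure_Iio_inv_le_of_forall_measure_Icc_le
      (withDensity_absolutelyContinuous e _ he) hνIcc
  set M := C + (e univ).toReal
  have hM0 : 0 ≤ M := by positivity
  have hM : ν univ ≤ ENNReal.ofReal M := by
    grw [withDensity_inv_univ_le e he, hνIcc 1 one_pos, Real.one_rpow, mul_one,
      ENNReal.ofReal_add hC.le ENNReal.toReal_nonneg, ENNReal.ofReal_toReal (measure_ne_top e _)]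
  have hbound : ∀ μ, 0 < μ → ∀ B, 0 ≤ B → ∫⁻ t in Ioo 0 μ⁻¹, ν (Iio t⁻¹) ≤ ENNReal.ofReal B →
      ∫ l, ((l + μ) ^ 2)⁻¹ ∂e ≤ B := fun μ hμ B hB hν =>
    integral_le_of_lintegral_ofReal_le (ae_of_all _ fun l => by positivity) (by fun_prop) hB <|
      (lintegral_ofReal_inv_sq_add_le e hμ).trans ((lintegral_ofReal_inv_max_eq ν hμ).trans_le hν)
  rcases lt_trichotomy α 2 with hα2 | rfl | hα2
  · refine ⟨C / (2 - α), by positivity, fun μ hμ => ⟨fun _ => ?_, by grind, by grind⟩⟩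
    exact hbound μ hμ _ (by positivity) (setLIntegral_measure_Iio_inv_le_of_lt_two hF hα2 hμ)
  · refine ⟨M + C, by positivity, fun μ hμ => ⟨by grind, fun _ => ?_, by grind⟩⟩
    exact hbound μ hμ _ (by positivity)
      (setLIntegral_measure_Iio_inv_le_of_eq_two hF hC.le rfl hM0 hM μ)
  · refine ⟨M + C / (α - 2), by positivity, fun μ hμ => ⟨by grind, by grind, fun _ => ?_⟩⟩
    exact hbound μ hμ _ (by positivity)
      (setLIntegral_measure_Iio_inv_le_of_two_lt hF hC.le hα2 hM0 hM _)

/-- Second moment of the regularized corrector: if the finite Borel measure `e` on `[0, ∞)`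
satisfies `∫_{[0,δ]} λ⁻¹ de(λ) ≤ C δ^{α-1}` for all `δ > 0`, then
`∫ (λ+μ)^{-2} de(λ) ≤ C' μ^{α-2}` if `α < 2`, `≤ C' ln_+(1/μ)` if `α = 2`, `≤ C'` if `α > 2`. -/
theorem resolvent_second_moment_bounds
    (e : Measure ℝ) [IsFiniteMeasure e] (he : e (Set.Iio 0) = 0)
    (α : ℝ) (hα : 1 < α) (C : ℝ) (hC : 0 < C)
    (h : ∀ δ : ℝ, 0 < δ →
      ∫⁻ l in Set.Icc (0 : ℝ) δ, (ENNReal.ofReal l)⁻¹ ∂e ≤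
        ENNReal.ofReal (C * δ ^ (α - 1))) :
    ∃ C' : ℝ, 0 < C' ∧ ∀ μ : ℝ, 0 < μ →
      (α < 2 → ∫ l, ((l + μ) ^ 2)⁻¹ ∂e ≤ C' * μ ^ (α - 2)) ∧
      (α = 2 → ∫ l, ((l + μ) ^ 2)⁻¹ ∂e ≤ C' * max 1 (Real.log (1 / μ))) ∧
      (2 < α → ∫ l, ((l + μ) ^ 2)⁻¹ ∂e ≤ C') :=
  resolvent_second_moment_bounds_general e he α C hC h
end
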